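/- arXiv:1811.08408 — 16 statements merged into one kernel-verified Lean document; each statement's English description precedes it below -/
import Mathlib

section
/- If S is a right noetherian semigroup, then S is weakly right noetherian: every right ideal of S is finitely generated. -/
/-- A right congruence on a semigroup: an equivalence relation compatible with
right multiplication. -/
def IsRightCongruence {S : Type*} [Semigroup S] (r : S → S → Prop) : Prop :=
  Equivalence r ∧ ∀ a b c : S, r a b → r (a * c) (b * c)

/-- A right congruence is finitely generated if it is the least right congruence
containing some finite set of pairs. -/
def IsFGRightCongruence {S : Type*} [Semigroup S] (r : S → S → Prop) : Prop :=
  IsRightCongruence r ∧ ∃ X : Finset (S × S),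
    (∀ p ∈ X, r p.1 p.2) ∧
    ∀ r' : S → S → Prop, IsRightCongruence r' → (∀ p ∈ X, r' p.1 p.2) →
      ∀ a b : S, r a b → r' a b

/-- A semigroup is right noetherian if every right congruence on it is finitely
generated. -/
def RightNoetherian (S : Type*) [Semigroup S] : Prop :=
  ∀ r : S → S → Prop, IsRightCongruence r → IsFGRightCongruence r

theorem rightNoetherian_weakly (S : Type*) [Semigroup S] (h : RightNoetherian S)
    (I : Set S) (hne : I.Nonempty) (hI : ∀ a ∈ I, ∀ s : S, a * s ∈ I) :
    ∃ X : Finset S, ↑X ⊆ I ∧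
      I = ↑X ∪ {a : S | ∃ x ∈ X, ∃ s : S, a = x * s} := by
  classical
  obtain ⟨a₀, ha₀⟩ := hne
  -- The Rees right congruence of I
  set r : S → S → Prop := fun a b => a = b ∨ (a ∈ I ∧ b ∈ I) with hr
  have hrc : IsRightCongruence r := by
    constructor
    · constructor
      · intro a; left; rfl
      · intro a b hab; rcases hab with rfl | ⟨ha, hb⟩
        · left; rfl
        · right; exact ⟨hb, ha⟩
      · intro a b c hab hbc
        rcases hab with rfl | ⟨ha, hb⟩
        · exact hbc
        · rcases hbc with rfl | ⟨hb', hc⟩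
          · right; exact ⟨ha, hb⟩
          · right; exact ⟨ha, hc⟩
    · intro a b c hab
      rcases hab with rfl | ⟨ha, hb⟩
      · left; rfl
      · right; exact ⟨hI a ha c, hI b hb c⟩
  obtain ⟨_, X, hX, hmin⟩ := h r hrc
  -- Candidate finite generating set for I
  set F : Finset S :=
    insert a₀ (((X.image Prod.fst ∪ X.image Prod.snd)).filter (fun x => x ∈ I)) with hF
  have hFI : (↑F : Set S) ⊆ I := by
    intro x hx
    simp only [hF, Finset.coe_insert, Set.mem_insert_iff, Finset.coe_filter,
      Set.mem_setOf_eq] at hx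
    rcases hx with rfl | ⟨_, hxI⟩
    · exact ha₀
    · exact hxI
  set J : Set S := ↑F ∪ {a : S | ∃ x ∈ F, ∃ s : S, a = x * s} with hJ
  have hJI : J ⊆ I := by
    intro a ha
    rcases ha with ha | ⟨x, hx, s, rfl⟩
    · exact hFI ha
    · exact hI x (hFI hx) s
  -- J is a right ideal
  have hJideal : ∀ a ∈ J, ∀ s : S, a * s ∈ J := by
    intro a ha s
    rcases ha with ha | ⟨x, hx, t, rfl⟩
    · right; exact ⟨a, ha, s, rfl⟩
    · right; exact ⟨x, hx, t * s, by rw [mul_assoc]⟩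
  -- The Rees congruence of J
  set r' : S → S → Prop := fun a b => a = b ∨ (a ∈ J ∧ b ∈ J) with hr'
  have hr'c : IsRightCongruence r' := by
    constructor
    · constructor
      · intro a; left; rfl
      · intro a b hab; rcases hab with rfl | ⟨ha, hb⟩
        · left; rfl
        · right; exact ⟨hb, ha⟩
      · intro a b c hab hbc
        rcases hab with rfl | ⟨ha, hb⟩
        · exact hbc
        · rcases hbc with rfl | ⟨hb', hc⟩
          · right; exact ⟨ha, hb⟩
          · right; exact ⟨ha, hc⟩
    · intro a b c hab
      rcases hab with rfl | ⟨ha, hb⟩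
      · left; rfl
      · right; exact ⟨hJideal a ha c, hJideal b hb c⟩
  have hXr' : ∀ p ∈ X, r' p.1 p.2 := by
    intro p hp
    have := hX p hp
    rcases this with heq | ⟨h1, h2⟩
    · left; exact heq
    · right
      constructor
      · left
        simp only [hF, Finset.coe_insert, Set.mem_insert_iff, Finset.coe_filter,
          Set.mem_setOf_eq]
        right
        exact ⟨Finset.mem_union_left _ (Finset.mem_image_of_mem _ hp), h1⟩
      · left
        simp only [hF, Finset.coe_insert, Set.mem_insert_iff, Finset.coe_filter,
          Set.mem_setOf_eq]
        right
        exact ⟨Finset.mem_union_right _ (Finset.mem_image_of_mem _ hp), h2⟩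
  have key := hmin r' hr'c hXr'
  refine ⟨F, hFI, Set.Subset.antisymm ?_ hJI⟩
  intro a ha
  have : r a a₀ := Or.inr ⟨ha, ha₀⟩
  rcases key a a₀ this with rfl | ⟨haJ, _⟩
  · left
    simp [hF]
  · exact haJ
end

section
/- A right noetherian semigroup has only finitely many indecomposable elements. -/
theorem rightNoetherian_finite_indecomposable (S : Type*) [Semigroup S]
    (h : RightNoetherian S) :
    {s : S | ¬ ∃ a b : S, s = a * b}.Finite := by
  classical
  -- Apply noetherianity to the universal relation.
  have huniv : IsRightCongruence (fun (_ _ : S) => True) :=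
    ⟨⟨fun _ => trivial, fun _ => trivial, fun _ _ => trivial⟩, fun _ _ _ _ => trivial⟩
  obtain ⟨-, X, -, hmin⟩ := h _ huniv
  -- D : decomposable or a coordinate of X
  set D : S → Prop := fun x =>
    (∃ a b : S, x = a * b) ∨ x ∈ X.image Prod.fst ∨ x ∈ X.image Prod.snd with hD
  set r' : S → S → Prop := fun a b => a = b ∨ (D a ∧ D b) with hr'
  have hcong : IsRightCongruence r' := by
    refine ⟨⟨fun a => Or.inl rfl, ?_, ?_⟩, ?_⟩
    · rintro a b (rfl | ⟨ha, hb⟩)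
      · exact Or.inl rfl
      · exact Or.inr ⟨hb, ha⟩
    · rintro a b c (rfl | ⟨ha, hb⟩) hbc
      · exact hbc
      · rcases hbc with rfl | ⟨_, hc⟩
        · exact Or.inr ⟨ha, hb⟩
        · exact Or.inr ⟨ha, hc⟩
    · rintro a b c (rfl | ⟨_, _⟩)
      · exact Or.inl rfl
      · exact Or.inr ⟨Or.inl ⟨a, c, rfl⟩, Or.inl ⟨b, c, rfl⟩⟩
  have hX : ∀ p ∈ X, r' p.1 p.2 := by
    intro p hp
    exact Or.inr ⟨Or.inr (Or.inl (Finset.mem_image_of_mem _ hp)),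
      Or.inr (Or.inr (Finset.mem_image_of_mem _ hp))⟩
  have hall := hmin r' hcong hX
  apply Set.Finite.subset (Finset.finite_toSet (X.image Prod.fst ∪ X.image Prod.snd))
  intro s hs
  simp only [Set.mem_setOf_eq] at hs
  rcases hall s (s * s) trivial with heq | ⟨hDs, -⟩
  · exact absurd ⟨s, s, heq⟩ hs
  · rcases hDs with hdec | hc | hc
    · exact absurd hdec hs
    · exact Finset.mem_coe.mpr (Finset.mem_union_left _ hc)
    · exact Finset.mem_coe.mpr (Finset.mem_union_right _ hc)
end

section
/- A group G is right noetherian (every right congruence on G is finitely generated) if and only if every subgroup of G is finitely generated. -/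
/-- The subgroup associated to a right congruence. -/
def congSubgroup {G : Type*} [Group G] (r : G → G → Prop)
    (hr : IsRightCongruence r) : Subgroup G where
  carrier := {g | r g 1}
  one_mem' := hr.1.refl 1
  mul_mem' := by
    intro a b ha hb
    have h1 : r (a * b) (1 * b) := hr.2 a 1 b ha
    rw [one_mul] at h1
    exact hr.1.trans h1 hb
  inv_mem' := by
    intro a ha
    have h1 : r (a * a⁻¹) (1 * a⁻¹) := hr.2 a 1 a⁻¹ ha
    rw [one_mul, mul_inv_cancel] at h1
    exact hr.1.symm h1

theorem cong_iff_mem {G : Type*} [Group G] (r : G → G → Prop)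
    (hr : IsRightCongruence r) (a b : G) :
    r a b ↔ a * b⁻¹ ∈ congSubgroup r hr := by
  constructor
  · intro h
    have h1 : r (a * b⁻¹) (b * b⁻¹) := hr.2 a b b⁻¹ h
    rwa [mul_inv_cancel] at h1
  · intro h
    have h1 : r (a * b⁻¹ * b) (1 * b) := hr.2 _ 1 b h
    rwa [one_mul, inv_mul_cancel_right] at h1

/-- The right congruence associated to a subgroup. -/
theorem subgroupCong_isCong {G : Type*} [Group G] (H : Subgroup G) :
    IsRightCongruence (fun a b => a * b⁻¹ ∈ H) := by
  constructor
  · constructor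
    · intro a; simpa using H.one_mem
    · intro a b h
      simpa using H.inv_mem h
    · intro a b c hab hbc
      have := H.mul_mem hab hbc
      simpa [mul_assoc] using this
  · intro a b c h
    simpa [mul_assoc] using h

theorem group_rightNoetherian_iff (G : Type*) [Group G] :
    RightNoetherian G ↔ ∀ H : Subgroup G, H.FG := by
  constructor
  · intro hN H
    set r : G → G → Prop := fun a b => a * b⁻¹ ∈ H with hrdef
    obtain ⟨hr, X, hX1, hX2⟩ := hN r (subgroupCong_isCong H)
    rw [Subgroup.fg_iff]
    refine ⟨(fun p : G × G => p.1 * p.2⁻¹) '' ↑X, ?_, (X.finite_toSet.image _)⟩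
    apply le_antisymm
    · rw [Subgroup.closure_le]
      rintro g ⟨p, hp, rfl⟩
      exact hX1 p hp
    · intro g hg
      set K := Subgroup.closure ((fun p : G × G => p.1 * p.2⁻¹) '' ↑X)
      have hr' := subgroupCong_isCong K
      have : (fun a b => a * b⁻¹ ∈ K) g 1 := by
        refine hX2 _ hr' ?_ g 1 (show g * (1:G)⁻¹ ∈ H by simpa using hg)
        intro p hp
        exact Subgroup.subset_closure ⟨p, hp, rfl⟩
      simpa using this
  · intro hFG r hr
    refine ⟨hr, ?_⟩
    classical
    obtain ⟨S, hS⟩ := hFG (congSubgroup r hr)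
    refine ⟨S.image (fun s => (s, 1)), ?_, ?_⟩
    · intro p hp
      simp only [Finset.mem_image] at hp
      obtain ⟨s, hs, rfl⟩ := hp
      have : s ∈ congSubgroup r hr := hS ▸ Subgroup.subset_closure hs
      exact this
    · intro r' hr' hX a b hab
      have hmem : a * b⁻¹ ∈ congSubgroup r hr := (cong_iff_mem r hr a b).mp hab
      have hsub : congSubgroup r hr ≤ congSubgroup r' hr' := by
        rw [← hS, Subgroup.closure_le]
        intro s hs
        have := hX (s, 1) (Finset.mem_image_of_mem _ hs)
        exact this
      exact (cong_iff_mem r' hr' a b).mpr (hsub hmem)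
end

section
/- If S is a right noetherian semigroup and T is a homomorphic image of S (there is a surjective semigroup homomorphism S → T), then T is right noetherian. -/
theorem rightNoetherian_of_surjective (S T : Type*) [Semigroup S] [Semigroup T]
    (h : RightNoetherian S) (f : S → T)
    (hf : ∀ a b : S, f (a * b) = f a * f b) (hsurj : Function.Surjective f) :
    RightNoetherian T := by
  intro r hr
  -- pull back r to S
  set r' : S → S → Prop := fun a b => r (f a) (f b) with hr'def
  have hr' : IsRightCongruence r' := by
    refine ⟨⟨fun a => hr.1.refl _, fun hab => hr.1.symm hab, fun hab hbc => hr.1.trans hab hbc⟩,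
      fun a b c hab => ?_⟩
    simp only [hr'def, hf]
    exact hr.2 _ _ _ hab
  obtain ⟨-, X, hX1, hX2⟩ := h r' hr'
  classical
  refine ⟨hr, X.image (fun p => (f p.1, f p.2)), ?_, ?_⟩
  · intro p hp
    simp only [Finset.mem_image] at hp
    obtain ⟨q, hq, rfl⟩ := hp
    exact hX1 q hq
  · intro r'' hr'' hX'' a b hab
    obtain ⟨a, rfl⟩ := hsurj a
    obtain ⟨b, rfl⟩ := hsurj b
    have hs : IsRightCongruence (fun a b : S => r'' (f a) (f b)) := by
      refine ⟨⟨fun a => hr''.1.refl _, fun hab => hr''.1.symm hab,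
        fun hab hbc => hr''.1.trans hab hbc⟩, fun a b c hab => ?_⟩
      simp only [hf]
      exact hr''.2 _ _ _ hab
    exact hX2 _ hs (fun p hp => hX'' (f p.1, f p.2)
      (Finset.mem_image_of_mem _ hp)) a b hab
end

section
/- Let S be a semigroup and I an ideal of S. If both I (as a semigroup) and the Rees quotient S/I are right noetherian, then S is right noetherian. -/
/-- A right congruence on a subset `T` of a semigroup (viewed as a subsemigroup):
an equivalence relation on `T` compatible with right multiplication by elements of `T`. -/
def IsRightCongruenceOn {S : Type*} [Semigroup S] (T : Set S) (r : S → S → Prop) : Prop :=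
  (∀ a ∈ T, r a a) ∧ (∀ a b : S, r a b → r b a) ∧
  (∀ a b c : S, r a b → r b c → r a c) ∧
  (∀ a b : S, r a b → a ∈ T ∧ b ∈ T) ∧
  (∀ a b c : S, r a b → c ∈ T → r (a * c) (b * c))

/-- Finite generation of a right congruence on the subsemigroup `T`. -/
def IsFGRightCongruenceOn {S : Type*} [Semigroup S] (T : Set S) (r : S → S → Prop) : Prop :=
  IsRightCongruenceOn T r ∧ ∃ X : Finset (S × S),
    (∀ p ∈ X, r p.1 p.2) ∧
    ∀ r' : S → S → Prop, IsRightCongruenceOn T r' → (∀ p ∈ X, r' p.1 p.2) →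
      ∀ a b : S, r a b → r' a b

/-- The subsemigroup `T` is right noetherian. -/
def RightNoetherianOn {S : Type*} [Semigroup S] (T : Set S) : Prop :=
  ∀ r : S → S → Prop, IsRightCongruenceOn T r → IsFGRightCongruenceOn T r

theorem rightNoetherian_of_ideal_extension (S : Type*) [Semigroup S] (I : Set S)
    (hne : I.Nonempty)
    (hideal : ∀ a ∈ I, ∀ s : S, a * s ∈ I ∧ s * a ∈ I)
    (hInoeth : RightNoetherianOn I)
    -- the Rees quotient S/I is right noetherian: every right congruence on S
    -- collapsing I is finitely generated relative to the Rees congruence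
    (hquot : ∀ r : S → S → Prop, IsRightCongruence r →
      (∀ a b : S, a ∈ I → b ∈ I → r a b) →
      ∃ X : Finset (S × S), (∀ p ∈ X, r p.1 p.2) ∧
        ∀ r' : S → S → Prop, IsRightCongruence r' →
          (∀ a b : S, a ∈ I → b ∈ I → r' a b) →
          (∀ p ∈ X, r' p.1 p.2) → ∀ a b : S, r a b → r' a b) :
    RightNoetherian S := by
  classical
  intro ρ hρ
  obtain ⟨hρeq, hρcomp⟩ := hρ
  -- the join of ρ with the Rees congruence
  set C : S → Prop := fun a => ∃ y ∈ I, ρ a y with hC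
  set σ : S → S → Prop := fun a b => ρ a b ∨ (C a ∧ C b) with hσdef
  have hσ : IsRightCongruence σ := by
    constructor
    · constructor
      · intro a; exact Or.inl (hρeq.refl a)
      · rintro a b (h | ⟨ha, hb⟩)
        · exact Or.inl (hρeq.symm h)
        · exact Or.inr ⟨hb, ha⟩
      · rintro a b c (hab | ⟨ha, hb⟩) (hbc | ⟨hb', hc⟩)
        · exact Or.inl (hρeq.trans hab hbc)
        · refine Or.inr ⟨?_, hc⟩
          obtain ⟨y, hy, hby⟩ := hb'
          exact ⟨y, hy, hρeq.trans hab hby⟩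
        · refine Or.inr ⟨ha, ?_⟩
          obtain ⟨y, hy, hby⟩ := hb
          exact ⟨y, hy, hρeq.trans (hρeq.symm hbc) hby⟩
        · exact Or.inr ⟨ha, hc⟩
    · rintro a b c (h | ⟨⟨ya, hya, ha⟩, ⟨yb, hyb, hb⟩⟩)
      · exact Or.inl (hρcomp a b c h)
      · exact Or.inr ⟨⟨ya * c, (hideal ya hya c).1, hρcomp a ya c ha⟩,
          ⟨yb * c, (hideal yb hyb c).1, hρcomp b yb c hb⟩⟩
  have hσI : ∀ a b : S, a ∈ I → b ∈ I → σ a b := by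
    intro a b ha hb
    exact Or.inr ⟨⟨a, ha, hρeq.refl a⟩, ⟨b, hb, hρeq.refl b⟩⟩
  obtain ⟨K, hK1, hK2⟩ := hquot σ hσ hσI
  -- the restriction of ρ to I
  set ρI : S → S → Prop := fun a b => a ∈ I ∧ b ∈ I ∧ ρ a b with hρIdef
  have hρIcong : IsRightCongruenceOn I ρI := by
    refine ⟨fun a ha => ⟨ha, ha, hρeq.refl a⟩,
      fun a b h => ⟨h.2.1, h.1, hρeq.symm h.2.2⟩,
      fun a b c h h' => ⟨h.1, h'.2.1, hρeq.trans h.2.2 h'.2.2⟩,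
      fun a b h => ⟨h.1, h.2.1⟩,
      fun a b c h hc => ⟨(hideal a h.1 c).1, (hideal b h.2.1 c).1,
        hρcomp a b c h.2.2⟩⟩
  obtain ⟨-, H, hH1, hH2⟩ := hInoeth ρI hρIcong
  -- choice of representatives in I
  set hat : S → S := fun x => if h : ∃ y, y ∈ I ∧ ρ x y then h.choose else x with hhat
  have hhat1 : ∀ x : S, C x → hat x ∈ I ∧ ρ x (hat x) := by
    intro x hx
    obtain ⟨y, hy, hxy⟩ := hx
    have h : ∃ y, y ∈ I ∧ ρ x y := ⟨y, hy, hxy⟩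
    simp only [hhat, dif_pos h]
    exact ⟨h.choose_spec.1, h.choose_spec.2⟩
  -- the patched generating pairs from K
  set K' : Finset (S × S) := K.biUnion (fun p =>
    if ρ p.1 p.2 then {p} else {(p.1, hat p.1), (p.2, hat p.2)}) with hK'def
  refine ⟨⟨hρeq, hρcomp⟩, H ∪ K', ?_, ?_⟩
  · -- all pairs lie in ρ
    intro p hp
    rcases Finset.mem_union.mp hp with hp | hp
    · exact (hH1 p hp).2.2
    · obtain ⟨q, hq, hpq⟩ := Finset.mem_biUnion.mp hp
      by_cases h : ρ q.1 q.2
      · rw [if_pos h, Finset.mem_singleton] at hpq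
        subst hpq; exact h
      · rw [if_neg h] at hpq
        rcases hK1 q hq with h' | ⟨hq1, hq2⟩
        · exact absurd h' h
        · simp only [Finset.mem_insert, Finset.mem_singleton] at hpq
          rcases hpq with rfl | rfl
          · exact (hhat1 q.1 hq1).2
          · exact (hhat1 q.2 hq2).2
  · -- minimality
    intro r hr hXr a b hab
    -- replace r by r ∩ ρ
    set r' : S → S → Prop := fun a b => r a b ∧ ρ a b with hr'def
    have hr'cong : IsRightCongruence r' := by
      refine ⟨⟨fun a => ⟨hr.1.refl a, hρeq.refl a⟩,
        fun h => ⟨hr.1.symm h.1, hρeq.symm h.2⟩,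
        fun h h' => ⟨hr.1.trans h.1 h'.1, hρeq.trans h.2 h'.2⟩⟩,
        fun a b c h => ⟨hr.2 a b c h.1, hρcomp a b c h.2⟩⟩
    have hXr' : ∀ p ∈ H ∪ K', r' p.1 p.2 := by
      intro p hp
      refine ⟨hXr p hp, ?_⟩
      rcases Finset.mem_union.mp hp with hp | hp
      · exact (hH1 p hp).2.2
      · obtain ⟨q, hq, hpq⟩ := Finset.mem_biUnion.mp hp
        by_cases h : ρ q.1 q.2
        · rw [if_pos h, Finset.mem_singleton] at hpq
          subst hpq; exact h
        · rw [if_neg h] at hpq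
          rcases hK1 q hq with h' | ⟨hq1, hq2⟩
          · exact absurd h' h
          · simp only [Finset.mem_insert, Finset.mem_singleton] at hpq
            rcases hpq with rfl | rfl
            · exact (hhat1 q.1 hq1).2
            · exact (hhat1 q.2 hq2).2
    -- the extension of r' collapsing I, used to exploit hK2
    set r'' : S → S → Prop := fun a b =>
      r' a b ∨ ((∃ a' ∈ I, r' a a') ∧ (∃ b' ∈ I, r' b b')) with hr''def
    have hr''cong : IsRightCongruence r'' := by
      constructor
      · constructor
        · intro a; exact Or.inl (hr'cong.1.refl a)
        · rintro a b (h | ⟨ha, hb⟩)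
          · exact Or.inl (hr'cong.1.symm h)
          · exact Or.inr ⟨hb, ha⟩
        · rintro a b c (hab' | ⟨ha, hb⟩) (hbc | ⟨hb', hc⟩)
          · exact Or.inl (hr'cong.1.trans hab' hbc)
          · refine Or.inr ⟨?_, hc⟩
            obtain ⟨y, hy, hby⟩ := hb'
            exact ⟨y, hy, hr'cong.1.trans hab' hby⟩
          · refine Or.inr ⟨ha, ?_⟩
            obtain ⟨y, hy, hby⟩ := hb
            exact ⟨y, hy, hr'cong.1.trans (hr'cong.1.symm hbc) hby⟩
          · exact Or.inr ⟨ha, hc⟩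
      · rintro a b c (h | ⟨⟨ya, hya, ha⟩, ⟨yb, hyb, hb⟩⟩)
        · exact Or.inl (hr'cong.2 a b c h)
        · exact Or.inr ⟨⟨ya * c, (hideal ya hya c).1, hr'cong.2 a ya c ha⟩,
            ⟨yb * c, (hideal yb hyb c).1, hr'cong.2 b yb c hb⟩⟩
    have hr''I : ∀ a b : S, a ∈ I → b ∈ I → r'' a b := by
      intro a b ha hb
      exact Or.inr ⟨⟨a, ha, hr'cong.1.refl a⟩, ⟨b, hb, hr'cong.1.refl b⟩⟩
    have hr''K : ∀ p ∈ K, r'' p.1 p.2 := by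
      intro p hp
      by_cases h : ρ p.1 p.2
      · have : p ∈ K' := Finset.mem_biUnion.mpr ⟨p, hp, by
          rw [if_pos h]; exact Finset.mem_singleton_self p⟩
        exact Or.inl (hXr' p (Finset.mem_union_right H this))
      · rcases hK1 p hp with h' | ⟨hp1, hp2⟩
        · exact absurd h' h
        · have h1 : (p.1, hat p.1) ∈ K' := Finset.mem_biUnion.mpr ⟨p, hp, by
            rw [if_neg h]; exact Finset.mem_insert_self _ _⟩
          have h2 : (p.2, hat p.2) ∈ K' := Finset.mem_biUnion.mpr ⟨p, hp, by
            rw [if_neg h]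
            exact Finset.mem_insert_of_mem (Finset.mem_singleton_self _)⟩
          exact Or.inr ⟨⟨hat p.1, (hhat1 p.1 hp1).1,
              hXr' _ (Finset.mem_union_right H h1)⟩,
            ⟨hat p.2, (hhat1 p.2 hp2).1,
              hXr' _ (Finset.mem_union_right H h2)⟩⟩
    -- the restriction of r' to I contains ρI
    have hrI : ∀ x y : S, x ∈ I → y ∈ I → ρ x y → r' x y := by
      set rI : S → S → Prop := fun x y => x ∈ I ∧ y ∈ I ∧ r' x y with hrIdef
      have hrIcong : IsRightCongruenceOn I rI := by
        refine ⟨fun a ha => ⟨ha, ha, hr'cong.1.refl a⟩,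
          fun a b h => ⟨h.2.1, h.1, hr'cong.1.symm h.2.2⟩,
          fun a b c h h' => ⟨h.1, h'.2.1, hr'cong.1.trans h.2.2 h'.2.2⟩,
          fun a b h => ⟨h.1, h.2.1⟩,
          fun a b c h hc => ⟨(hideal a h.1 c).1, (hideal b h.2.1 c).1,
            hr'cong.2 a b c h.2.2⟩⟩
      have hHrI : ∀ p ∈ H, rI p.1 p.2 := by
        intro p hp
        obtain ⟨h1, h2, _⟩ := hH1 p hp
        exact ⟨h1, h2, hXr' p (Finset.mem_union_left K' hp)⟩
      intro x y hx hy hxy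
      exact (hH2 rI hrIcong hHrI x y ⟨hx, hy, hxy⟩).2.2
    -- conclude
    have hσr'' := hK2 r'' hr''cong hr''I hr''K a b (Or.inl hab)
    rcases hσr'' with h | ⟨⟨a', ha', haa'⟩, ⟨b', hb', hbb'⟩⟩
    · exact h.1
    · have hρa'b' : ρ a' b' :=
        hρeq.trans (hρeq.symm haa'.2) (hρeq.trans hab hbb'.2)
      have := hrI a' b' ha' hb' hρa'b'
      exact hr.1.trans haa'.1 (hr.1.trans this.1 (hr.1.symm hbb'.1))
end

section
/- Let S be a semigroup with a subsemigroup T such that S \ T is finite. Then S is right noetherian if and only if T is right noetherian. -/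
/-!
View `S` as a right act over `T`. If `S` is right noetherian, so is this act, by noetherian
induction over the right congruences `σ ≤ ν` of `S`, for `ν` compatible with right multiplication
by `T`. If `ν = σ`, the finitely many generators of `σ` together with their translates by the finite
set `S \ T` generate `ν` over `T`. Otherwise a pair `(a, b) ∈ ν \ σ` enlarges `σ`, and the
induction hypothesis applies to the `T`-compatible equivalence generated by `ν` and the finitely
many translates `(a c, b c)`, `c ∉ T`; chains through those translates are then bypassed by
`ν`-pairs in the finite set `a (S \ T) ∪ b (S \ T)`. Right congruences of `T` are the
`T`-compatible equivalences on `S` that are trivial off `T`.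

Conversely, a right congruence of `S` is generated by generators of its restriction to `T`, the
finitely many related pairs outside `T`, and one pair `(u, t)` with `t ∈ T` for each `u ∉ T`
related to `T`.
-/

open Set

def mergeClasses {α : Type*} (κ : α → α → Prop) (V : Set α) : α → α → Prop :=
  fun x y => κ x y ∨ (∃ u ∈ V, κ x u) ∧ ∃ v ∈ V, κ y v

theorem Equivalence.mergeClasses {α : Type*} {κ : α → α → Prop} (hκ : Equivalence κ)
    (V : Set α) : Equivalence (mergeClasses κ V) where
  refl x := Or.inl (hκ.refl x)
  symm := by
    rintro x y (h | ⟨hx, hy⟩)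
    exacts [Or.inl (hκ.symm h), Or.inr ⟨hy, hx⟩]
  trans := by
    have near : ∀ {x y}, κ x y → (∃ v ∈ V, κ y v) → ∃ v ∈ V, κ x v :=
      fun hxy ⟨v, hv, hyv⟩ => ⟨v, hv, hκ.trans hxy hyv⟩
    rintro x y z (hxy | ⟨hx, hy⟩) (hyz | ⟨hy', hz⟩)
    · exact Or.inl (hκ.trans hxy hyz)
    · exact Or.inr ⟨near hxy hy', hz⟩
    · exact Or.inr ⟨hx, near (hκ.symm hyz) hy⟩
    · exact Or.inr ⟨hx, hz⟩

section ActCongruence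

variable {S : Type*} [Semigroup S]

/-- Congruences of `S` regarded as a right act over `U ⊆ S`; for `U = univ` these are the right
congruences, and for `U = ∅` just the equivalence relations. -/
structure IsActCongruence (U : Set S) (r : S → S → Prop) : Prop where
  equivalence : Equivalence r
  mul_right : ∀ {a b c : S}, r a b → c ∈ U → r (a * c) (b * c)

inductive ActConGen (U : Set S) (A : Set (S × S)) : S → S → Prop
  | of {a b : S} : (a, b) ∈ A → ActConGen U A a b
  | refl (a : S) : ActConGen U A a a
  | symm {a b : S} : ActConGen U A a b → ActConGen U A b a
  | trans {a b c : S} : ActConGen U A a b → ActConGen U A b c → ActConGen U A a c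
  | mul_right {a b c : S} : ActConGen U A a b → c ∈ U → ActConGen U A (a * c) (b * c)

def IsFGActCongruence (U : Set S) (r : S → S → Prop) : Prop :=
  ∃ X : Set (S × S), X.Finite ∧ ActConGen U X = r

def IsNoetherianAct (U : Set S) : Prop :=
  ∀ r : S → S → Prop, IsActCongruence U r → IsFGActCongruence U r

def rightTranslates (A : Set (S × S)) (C : Set S) : Set (S × S) :=
  image2 (fun p c => (p.1 * c, p.2 * c)) A C

theorem IsActCongruence.mono {U V : Set S} {r : S → S → Prop} (hr : IsActCongruence U r)
    (hVU : V ⊆ U) : IsActCongruence V r :=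
  ⟨hr.equivalence, fun hab hc => hr.mul_right hab (hVU hc)⟩

theorem IsActCongruence.rightTranslates_subset {r : S → S → Prop}
    (hr : IsActCongruence univ r) (C : Set S) :
    rightTranslates {p | r p.1 p.2} C ⊆ {p | r p.1 p.2} := by
  rintro _ ⟨p, hp, c, -, rfl⟩
  exact hr.mul_right hp (mem_univ c)

namespace ActConGen

variable {U : Set S} {A B : Set (S × S)}

theorem isActCongruence : IsActCongruence U (ActConGen U A) :=
  ⟨⟨refl, symm, trans⟩, mul_right⟩

theorem le_of_forall {r : S → S → Prop} (hr : IsActCongruence U r)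
    (hA : ∀ p ∈ A, r p.1 p.2) : ActConGen U A ≤ r := by
  intro x y h
  induction h with
  | of h => exact hA _ h
  | refl a => exact hr.equivalence.refl a
  | symm _ ih => exact hr.equivalence.symm ih
  | trans _ _ ih₁ ih₂ => exact hr.equivalence.trans ih₁ ih₂
  | mul_right _ hc ih => exact hr.mul_right ih hc

theorem mono (h : A ⊆ B) : ActConGen U A ≤ ActConGen U B :=
  le_of_forall isActCongruence fun _ hp => of (h hp)

theorem exists_finite_subset {x y : S} (h : ActConGen U A x y) :
    ∃ B ⊆ A, B.Finite ∧ ActConGen U B x y := by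
  induction h with
  | @of a b h => exact ⟨{(a, b)}, singleton_subset_iff.2 h, finite_singleton _, of rfl⟩
  | refl a => exact ⟨∅, empty_subset _, finite_empty, refl a⟩
  | symm _ ih =>
    obtain ⟨B, hBA, hB, h⟩ := ih
    exact ⟨B, hBA, hB, h.symm⟩
  | trans _ _ ih₁ ih₂ =>
    obtain ⟨B₁, hBA₁, hB₁, h₁⟩ := ih₁
    obtain ⟨B₂, hBA₂, hB₂, h₂⟩ := ih₂
    exact ⟨B₁ ∪ B₂, union_subset hBA₁ hBA₂, hB₁.union hB₂,
      (mono subset_union_left _ _ h₁).trans (mono subset_union_right _ _ h₂)⟩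
  | mul_right _ hc ih =>
    obtain ⟨B, hBA, hB, h⟩ := ih
    exact ⟨B, hBA, hB, h.mul_right hc⟩

theorem exists_finite_subset_of_finite {Z : Set (S × S)} (hZ : Z.Finite)
    (h : ∀ p ∈ Z, ActConGen U A p.1 p.2) :
    ∃ B ⊆ A, B.Finite ∧ ∀ p ∈ Z, ActConGen U B p.1 p.2 := by
  choose! B hBA hB hpB using fun p hp => exists_finite_subset (h p hp)
  exact ⟨⋃ p ∈ Z, B p, iUnion₂_subset hBA, hZ.biUnion hB,
    fun p hp => mono (subset_biUnion_of_mem hp) _ _ (hpB p hp)⟩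

theorem isActCongruence_of_forall {V : Set S} (hUV : ∀ c ∈ U, ∀ s ∈ V, c * s ∈ V)
    (hA : ∀ p ∈ A, ∀ s ∈ V, ActConGen U A (p.1 * s) (p.2 * s)) :
    IsActCongruence V (ActConGen U A) := by
  refine ⟨isActCongruence.equivalence, fun {x y s} h hs => ?_⟩
  induction h generalizing s with
  | of h => exact hA _ h s hs
  | refl a => exact refl _
  | symm _ ih => exact (ih hs).symm
  | trans _ _ ih₁ ih₂ => exact (ih₁ hs).trans (ih₂ hs)
  | mul_right _ hc ih =>
    rw [mul_assoc, mul_assoc]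
    exact ih (hUV _ hc s hs)

/-- Right multiplication by an element outside `U` is traded for a translate of a generator. -/
theorem univ_le_union_rightTranslates (A : Set (S × S)) :
    ActConGen univ A ≤ ActConGen U (A ∪ rightTranslates A Uᶜ) := by
  have hbase : ∀ p ∈ A, ∀ s, ActConGen U (A ∪ rightTranslates A Uᶜ) (p.1 * s) (p.2 * s) := by
    intro p hp s
    by_cases hs : s ∈ U
    · exact (of (Or.inl hp)).mul_right hs
    · exact of (Or.inr (mem_image2_of_mem hp hs))
  refine le_of_forall (isActCongruence_of_forall (fun _ _ _ _ => mem_univ _) ?_)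
    fun p hp => of (Or.inl hp)
  rintro p (hp | ⟨q, hq, c, -, rfl⟩) s -
  · exact hbase p hp s
  · simpa only [mul_assoc] using hbase q hq (c * s)

end ActConGen

open ActConGen

theorem IsFGActCongruence.of_le {U : Set S} {X : Set (S × S)} {r : S → S → Prop}
    (hr : IsActCongruence U r) (hX : X.Finite) (hXr : ∀ p ∈ X, r p.1 p.2) (hle : r ≤ ActConGen U X) :
    IsFGActCongruence U r :=
  ⟨X, hX, le_antisymm (le_of_forall hr hXr) hle⟩

theorem IsFGActCongruence.of_univ {T : Set S} (hfin : Tᶜ.Finite) {r : S → S → Prop}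
    (hr : IsActCongruence univ r) (h : IsFGActCongruence univ r) : IsFGActCongruence T r := by
  obtain ⟨X, hX, rfl⟩ := h
  refine .of_le (hr.mono (subset_univ T)) (hX.union (hX.image2 _ hfin)) ?_
    (univ_le_union_rightTranslates X)
  rintro _ (hp | ⟨q, hq, c, -, rfl⟩)
  · exact of hp
  · exact (of hq).mul_right (mem_univ c)

/-- A chain of generating steps leaving `V` through a translate `(a c, b c)` re-enters it through
another one, so between its first and last such step it joins two `ν`-related points of `V`. -/
theorem le_actConGen_of_le_union_rightTranslates {T V : Set S} {ν : S → S → Prop}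
    (hν : IsActCongruence T ν) {A : Set (S × S)} (hA : ∀ p ∈ A, ν p.1 p.2) {a b : S}
    (hab : ν a b) (hV : ∀ c ∉ T, a * c ∈ V ∧ b * c ∈ V)
    (hle : ν ≤ ActConGen T (A ∪ rightTranslates {(a, b)} Tᶜ)) :
    ν ≤ ActConGen T (insert (a, b) A ∪ V ×ˢ V ∩ {p | ν p.1 p.2}) := by
  set κ := ActConGen T (insert (a, b) A ∪ V ×ˢ V ∩ {p | ν p.1 p.2})
  set E := rightTranslates {(a, b)} Tᶜ
  have hκν : κ ≤ ν := le_of_forall hν <| by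
    rintro p ((rfl | hp) | ⟨-, hp⟩)
    exacts [hab, hA p hp, hp]
  have hchain : IsActCongruence T (ActConGen ∅ ({p | κ p.1 p.2} ∪ E)) := by
    refine isActCongruence_of_forall (fun _ h => absurd h (notMem_empty _)) ?_
    rintro _ (hp | ⟨_, rfl, c, -, rfl⟩) t ht
    · exact of (Or.inl (isActCongruence.mul_right hp ht))
    · simp only [mul_assoc]
      by_cases hct : c * t ∈ T
      · exact of (Or.inl ((of (Or.inl (mem_insert _ _))).mul_right hct))
      · exact of (Or.inr (mem_image2_of_mem (mem_singleton _) hct))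
  have hν_chain : ν ≤ ActConGen ∅ ({p | κ p.1 p.2} ∪ E) := by
    refine hle.trans (le_of_forall hchain ?_)
    rintro p (hp | hp)
    · exact of (Or.inl (of (Or.inl (mem_insert_of_mem _ hp))))
    · exact of (Or.inr hp)
  have hchain_merge : ActConGen ∅ ({p | κ p.1 p.2} ∪ E) ≤ mergeClasses κ V := by
    refine le_of_forall ⟨isActCongruence.equivalence.mergeClasses V,
      fun _ h => absurd h (notMem_empty _)⟩ ?_
    rintro _ (hp | ⟨_, rfl, c, hc, rfl⟩)
    · exact Or.inl hp
    · exact Or.inr ⟨⟨_, (hV c hc).1, refl _⟩, ⟨_, (hV c hc).2, refl _⟩⟩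
  intro x y hxy
  rcases hchain_merge _ _ (hν_chain _ _ hxy) with h | ⟨⟨u, hu, hxu⟩, v, hv, hyv⟩
  · exact h
  · have huv : ν u v := hν.equivalence.trans
      (hν.equivalence.trans (hν.equivalence.symm (hκν _ _ hxu)) hxy) (hκν _ _ hyv)
    exact hxu.trans ((of (Or.inr ⟨⟨hu, hv⟩, huv⟩)).trans hyv.symm)

theorem IsFGActCongruence.of_union_rightTranslates {T : Set S} (hfin : Tᶜ.Finite)
    {ν : S → S → Prop} (hν : IsActCongruence T ν) {a b : S} (hab : ν a b)
    (h : IsFGActCongruence T (ActConGen T ({p | ν p.1 p.2} ∪ rightTranslates {(a, b)} Tᶜ))) :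
    IsFGActCongruence T ν := by
  obtain ⟨Z, hZ, hZeq⟩ := h
  obtain ⟨B, hB, hBfin, hZB⟩ := exists_finite_subset_of_finite hZ fun p hp => hZeq ▸ of hp
  have hle : ν ≤ ActConGen T ((B ∩ {p | ν p.1 p.2}) ∪ rightTranslates {(a, b)} Tᶜ) :=
    calc ν ≤ ActConGen T ({p | ν p.1 p.2} ∪ rightTranslates {(a, b)} Tᶜ) :=
          fun _ _ h => of (Or.inl h)
      _ = ActConGen T Z := hZeq.symm
      _ ≤ ActConGen T B := le_of_forall isActCongruence hZB
      _ ≤ _ := mono fun p hp => (hB hp).imp (fun hpν => ⟨hp, hpν⟩) id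
  have hV : ((a * ·) '' Tᶜ ∪ (b * ·) '' Tᶜ).Finite := (hfin.image _).union (hfin.image _)
  refine .of_le hν (((hBfin.inter_of_left _).insert _).union ((hV.prod hV).inter_of_left _)) ?_
    (le_actConGen_of_le_union_rightTranslates hν (fun p hp => hp.2) hab
      (fun c hc => ⟨.inl ⟨c, hc, rfl⟩, .inr ⟨c, hc, rfl⟩⟩) hle)
  rintro p ((rfl | hp) | hp)
  exacts [hab, hp.2, hp.2]

theorem IsNoetherianAct.wellFoundedGT {U : Set S} (h : IsNoetherianAct U) :
    WellFoundedGT {r : S → S → Prop // IsActCongruence U r} := by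
  refine wellFoundedGT_iff_monotone_chain_condition.2 fun σ => ?_
  have hsup : IsActCongruence U fun x y => ∃ n, (σ n).1 x y := by
    refine ⟨⟨fun x => ⟨0, (σ 0).2.equivalence.refl x⟩, ?_, ?_⟩, ?_⟩
    · rintro x y ⟨n, h⟩
      exact ⟨n, (σ n).2.equivalence.symm h⟩
    · rintro x y z ⟨n, h₁⟩ ⟨m, h₂⟩
      exact ⟨max n m, (σ (max n m)).2.equivalence.trans
        (σ.monotone (le_max_left n m) x y h₁) (σ.monotone (le_max_right n m) y z h₂)⟩
    · rintro x y c ⟨n, h⟩ hc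
      exact ⟨n, (σ n).2.mul_right h hc⟩
  obtain ⟨X, hX, hXeq⟩ := h _ hsup
  choose! n hn using fun p (hp : p ∈ X) =>
    show ∃ n, (σ n).1 p.1 p.2 from (congr_fun₂ hXeq _ _).mp (of hp)
  obtain ⟨N, hN⟩ := (hX.image n).bddAbove
  refine ⟨N, fun m hm => le_antisymm (σ.monotone hm) ?_⟩
  calc (σ m).1 ≤ fun x y => ∃ n, (σ n).1 x y := fun x y h => ⟨m, h⟩
    _ = ActConGen U X := hXeq.symm
    _ ≤ (σ N).1 := le_of_forall (σ N).2 fun p hp =>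
        σ.monotone (hN ⟨p, hp, rfl⟩) _ _ (hn p hp)

theorem IsNoetherianAct.of_compl_finite {T : Set S} (hS : IsNoetherianAct (univ : Set S))
    (hfin : Tᶜ.Finite) : IsNoetherianAct T := by
  have := hS.wellFoundedGT
  suffices key : ∀ σ : {σ : S → S → Prop // IsActCongruence univ σ}, ∀ ν,
      IsActCongruence T ν → σ.1 ≤ ν → IsFGActCongruence T ν from
    fun ν hν => key ⟨Eq, eq_equivalence, fun h _ => h ▸ rfl⟩ ν hν
      fun x _ h => h ▸ hν.equivalence.refl x
  intro σ
  induction σ using WellFoundedGT.induction with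
  | ind σ ih =>
  intro ν hν hσν
  by_cases hνσ : ν ≤ σ.1
  · obtain rfl : ν = σ.1 := le_antisymm hνσ hσν
    exact .of_univ hfin σ.2 (hS _ σ.2)
  obtain ⟨a, b, hab, hnab⟩ : ∃ a b, ν a b ∧ ¬σ.1 a b := by simpa [Pi.le_def] using hνσ
  refine .of_union_rightTranslates hfin hν hab <|
    ih ⟨ActConGen univ ({p | σ.1 p.1 p.2} ∪ {(a, b)}), isActCongruence⟩ ?_ _ isActCongruence ?_
  · exact lt_of_le_not_ge (fun x y h => of (Or.inl h)) fun h => hnab (h a b (of (Or.inr rfl)))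
  · refine (univ_le_union_rightTranslates _).trans (mono ?_)
    rintro p ((hp | rfl) | hp)
    · exact Or.inl (hσν _ _ hp)
    · exact Or.inl hab
    · rw [rightTranslates, image2_union_left] at hp
      exact hp.imp (fun hp => hσν _ _ (σ.2.rightTranslates_subset _ hp)) id

theorem isRightCongruence_iff_isActCongruence_univ {r : S → S → Prop} :
    IsRightCongruence r ↔ IsActCongruence univ r :=
  ⟨fun h => ⟨h.1, fun hab _ => h.2 _ _ _ hab⟩,
    fun h => ⟨h.equivalence, fun _ _ c hab => h.mul_right hab (mem_univ c)⟩⟩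

theorem isFGRightCongruence_iff_isFGActCongruence_univ {r : S → S → Prop} :
    IsFGRightCongruence r ↔ IsFGActCongruence univ r := by
  constructor
  · rintro ⟨hr, X, hXr, hmin⟩
    exact .of_le (isRightCongruence_iff_isActCongruence_univ.1 hr) X.finite_toSet hXr
      (hmin _ (isRightCongruence_iff_isActCongruence_univ.2 isActCongruence) fun p hp => of hp)
  · rintro ⟨X, hX, rfl⟩
    refine ⟨isRightCongruence_iff_isActCongruence_univ.2 isActCongruence, hX.toFinset,
      fun p hp => of (hX.mem_toFinset.1 hp), fun r' hr' hXr' => ?_⟩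
    exact le_of_forall (isRightCongruence_iff_isActCongruence_univ.1 hr')
      fun p hp => hXr' p (hX.mem_toFinset.2 hp)

theorem rightNoetherian_iff_isNoetherianAct_univ :
    RightNoetherian S ↔ IsNoetherianAct (univ : Set S) := by
  simp only [RightNoetherian, IsNoetherianAct, isRightCongruence_iff_isActCongruence_univ,
    isFGRightCongruence_iff_isFGActCongruence_univ]

theorem IsRightCongruenceOn.isActCongruence_reflGen {T : Set S} {r : S → S → Prop}
    (hr : IsRightCongruenceOn T r) : IsActCongruence T (Relation.ReflGen r) := by
  obtain ⟨-, hsymm, htrans, -, hmul⟩ := hr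
  refine ⟨⟨fun _ => .refl, ?_, ?_⟩, ?_⟩
  · rintro x y (_ | h)
    exacts [.refl, .single (hsymm _ _ h)]
  · rintro x y z (_ | hxy) (_ | hyz)
    exacts [.refl, .single hyz, .single hxy, .single (htrans _ _ _ hxy hyz)]
  · rintro x y c (_ | h) hc
    exacts [.refl, .single (hmul _ _ _ h hc)]

theorem IsNoetherianAct.rightNoetherianOn {T : Set S} (h : IsNoetherianAct T) :
    RightNoetherianOn T := by
  intro r hr
  obtain ⟨X, hX, hXr⟩ := h _ hr.isActCongruence_reflGen
  have hY := hX.inter_of_left {p | r p.1 p.2}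
  refine ⟨hr, hY.toFinset, fun p hp => (hY.mem_toFinset.1 hp).2, fun r' hr' hYr' x y hxy => ?_⟩
  have hle : Relation.ReflGen r ≤ Relation.ReflGen r' := by
    rw [← hXr]
    refine le_of_forall hr'.isActCongruence_reflGen ?_
    rintro ⟨u, v⟩ hp
    rcases (congr_fun₂ hXr _ _).mp (of hp) with _ | h
    exacts [.refl, .single (hYr' _ (hY.mem_toFinset.2 ⟨hp, h⟩))]
  rcases hle x y (.single hxy) with _ | h
  exacts [hr'.1 x (hr.2.2.2.1 x x hxy).1, h]

theorem IsActCongruence.isRightCongruenceOn_restrict {T : Set S}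
    (hT : ∀ a ∈ T, ∀ b ∈ T, a * b ∈ T) {r : S → S → Prop} (hr : IsActCongruence T r) :
    IsRightCongruenceOn T fun x y => x ∈ T ∧ y ∈ T ∧ r x y :=
  ⟨fun x hx => ⟨hx, hx, hr.equivalence.refl x⟩,
    fun _ _ h => ⟨h.2.1, h.1, hr.equivalence.symm h.2.2⟩,
    fun _ _ _ h₁ h₂ => ⟨h₁.1, h₂.2.1, hr.equivalence.trans h₁.2.2 h₂.2.2⟩,
    fun _ _ h => ⟨h.1, h.2.1⟩,
    fun x y _ h hc => ⟨hT x h.1 _ hc, hT y h.2.1 _ hc, hr.mul_right h.2.2 hc⟩⟩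

theorem RightNoetherianOn.isNoetherianAct_univ {T : Set S} (hT : ∀ a ∈ T, ∀ b ∈ T, a * b ∈ T)
    (hfin : Tᶜ.Finite) (h : RightNoetherianOn T) : IsNoetherianAct (univ : Set S) := by
  intro r hr
  obtain ⟨-, XT, hXT, hXTmin⟩ := h _ ((hr.mono (subset_univ T)).isRightCongruenceOn_restrict hT)
  set W := {u | u ∉ T ∧ ∃ t ∈ T, r u t}
  choose! g hgT hg using fun u (hu : u ∈ W) => hu.2
  set X : Set (S × S) := ↑XT ∪ (Tᶜ ×ˢ Tᶜ ∩ {p | r p.1 p.2}) ∪ (fun u => (u, g u)) '' W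
  have hXr : ∀ p ∈ X, r p.1 p.2 := by
    rintro _ ((hp | ⟨-, hp⟩) | ⟨u, hu, rfl⟩)
    exacts [(hXT _ hp).2.2, hp, hg u hu]
  have hinT : ∀ {x y}, x ∈ T → y ∈ T → r x y → ActConGen univ X x y := fun hx hy hxy =>
    (hXTmin _ ((isActCongruence.mono (subset_univ T)).isRightCongruenceOn_restrict hT)
      (fun p hp => ⟨(hXT p hp).1, (hXT p hp).2.1, of (.inl (.inl hp))⟩) _ _ ⟨hx, hy, hxy⟩).2.2
  have hout : ∀ {x y}, x ∉ T → y ∈ T → r x y → ActConGen univ X x y := fun hx hy hxy =>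
    have hxW : _ ∈ W := ⟨hx, _, hy, hxy⟩
    (of (.inr ⟨_, hxW, rfl⟩)).trans <| hinT (hgT _ hxW) hy <|
      hr.equivalence.trans (hr.equivalence.symm (hg _ hxW)) hxy
  refine .of_le hr ?_ hXr fun x y hxy => ?_
  · exact (XT.finite_toSet.union ((hfin.prod hfin).inter_of_left _)).union
      ((hfin.subset fun _ hu => hu.1).image _)
  by_cases hx : x ∈ T <;> by_cases hy : y ∈ T
  · exact hinT hx hy hxy
  · exact (hout hy hx (hr.equivalence.symm hxy)).symm
  · exact hout hx hy hxy
  · exact of (.inl (.inr ⟨⟨hx, hy⟩, hxy⟩))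

end ActCongruence

theorem rightNoetherian_iff_cofinite_subsemigroup (S : Type*) [Semigroup S]
    (T : Set S) (hT : ∀ a ∈ T, ∀ b ∈ T, a * b ∈ T) (hfin : Tᶜ.Finite) :
    RightNoetherian S ↔ RightNoetherianOn T := by
  rw [rightNoetherian_iff_isNoetherianAct_univ]
  exact ⟨fun hS => (hS.of_compl_finite hfin).rightNoetherianOn,
    fun hTn => hTn.isNoetherianAct_univ hT hfin⟩
end

section
/- A semigroup S is right noetherian if and only if the monoid S¹ obtained by adjoining an identity element to S is right noetherian. -/
section Aux
variable {S : Type*} [Semigroup S]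

/-- Lift a relation on `S` to `WithOne S`. -/
def liftRel (r : S → S → Prop) (x y : WithOne S) : Prop :=
  x = y ∨ ∃ a b : S, x = a ∧ y = b ∧ r a b

lemma liftRel_congr {r : S → S → Prop} (hr : IsRightCongruence r) :
    IsRightCongruence (liftRel r) := by
  obtain ⟨⟨hrefl, hsymm, htrans⟩, hcomp⟩ := hr
  constructor
  · constructor
    · exact fun x => Or.inl rfl
    · rintro x y (rfl | ⟨a, b, rfl, rfl, hab⟩)
      · exact Or.inl rfl
      · exact Or.inr ⟨b, a, rfl, rfl, hsymm hab⟩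
    · rintro x y z (rfl | ⟨a, b, rfl, rfl, hab⟩) h2
      · exact h2
      · rcases h2 with h | ⟨b', c, hb', rfl, hbc⟩
        · exact Or.inr ⟨a, b, rfl, h.symm, hab⟩
        · rw [WithOne.coe_inj] at hb'
          exact Or.inr ⟨a, c, rfl, rfl, htrans hab (hb' ▸ hbc)⟩
  · rintro x y c (rfl | ⟨a, b, rfl, rfl, hab⟩)
    · exact Or.inl rfl
    · rcases eq_or_ne c 1 with rfl | hc
      · exact Or.inr ⟨a, b, by simp, by simp, hab⟩
      · obtain ⟨c, rfl⟩ := WithOne.ne_one_iff_exists.mp hc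
        exact Or.inr ⟨a * c, b * c, by simp, by simp, hcomp a b c hab⟩

lemma restrict_congr {ρ : WithOne S → WithOne S → Prop} (hρ : IsRightCongruence ρ) :
    IsRightCongruence (fun a b : S => ρ a b) := by
  obtain ⟨⟨hrefl, hsymm, htrans⟩, hcomp⟩ := hρ
  exact ⟨⟨fun a => hrefl _, fun h => hsymm h, fun h1 h2 => htrans h1 h2⟩,
    fun a b c h => by simpa [← WithOne.coe_mul] using hcomp (a : WithOne S) b c h⟩

end Aux

theorem rightNoetherian_iff_withOne (S : Type*) [Semigroup S] :
    RightNoetherian S ↔ RightNoetherian (WithOne S) := by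
  classical
  constructor
  · -- forward
    intro h ρ hρ
    obtain ⟨hX, X, hXmem, hXgen⟩ := h (fun a b : S => ρ a b) (restrict_congr hρ)
    obtain ⟨⟨hrefl, hsymm, htrans⟩, hcomp⟩ := hρ
    have key : ∀ (Y : Finset (WithOne S × WithOne S)),
        (∀ p ∈ (X.image fun p : S × S => ((p.1 : WithOne S), (p.2 : WithOne S))), p ∈ Y) →
        ∀ ρ' : (WithOne S) → (WithOne S) → Prop, IsRightCongruence ρ' →
          (∀ p ∈ Y, ρ' p.1 p.2) → ∀ a b : S, ρ (a : WithOne S) b → ρ' a b := by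
      intro Y hsub ρ' hρ' hY a b hab
      refine hXgen (fun a b : S => ρ' a b) (restrict_congr hρ') ?_ a b hab
      intro p hp
      exact hY _ (hsub _ (Finset.mem_image_of_mem _ hp))
    by_cases hone : ∃ a : S, ρ 1 (a : WithOne S)
    · obtain ⟨a₀, ha₀⟩ := hone
      refine ⟨⟨⟨hrefl, hsymm, htrans⟩, hcomp⟩,
        insert ((1 : WithOne S), (a₀ : WithOne S))
          (X.image fun p : S × S => ((p.1 : WithOne S), (p.2 : WithOne S))), ?_, ?_⟩
      · intro p hp
        rcases Finset.mem_insert.mp hp with rfl | hp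
        · exact ha₀
        · obtain ⟨q, hq, rfl⟩ := Finset.mem_image.mp hp
          exact hXmem q hq
      · intro ρ' hρ' hY x y hxy
        have hcoe := key _ (fun p hp => Finset.mem_insert_of_mem hp) ρ' hρ' hY
        have h10 : ρ' 1 (a₀ : WithOne S) := hY _ (Finset.mem_insert_self _ _)
        obtain ⟨⟨hrefl', hsymm', htrans'⟩, _⟩ := hρ'
        rcases eq_or_ne x 1 with rfl | hx
        · rcases eq_or_ne y 1 with rfl | hy
          · exact hrefl' 1
          · obtain ⟨b, rfl⟩ := WithOne.ne_one_iff_exists.mp hy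
            exact htrans' h10 (hcoe a₀ b (htrans (hsymm ha₀) hxy))
        · obtain ⟨a, rfl⟩ := WithOne.ne_one_iff_exists.mp hx
          rcases eq_or_ne y 1 with rfl | hy
          · exact hsymm' (htrans' h10 (hcoe a₀ a (htrans (hsymm ha₀) (hsymm hxy))))
          · obtain ⟨b, rfl⟩ := WithOne.ne_one_iff_exists.mp hy
            exact hcoe a b hxy
    · refine ⟨⟨⟨hrefl, hsymm, htrans⟩, hcomp⟩,
        X.image fun p : S × S => ((p.1 : WithOne S), (p.2 : WithOne S)), ?_, ?_⟩
      · intro p hp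
        obtain ⟨q, hq, rfl⟩ := Finset.mem_image.mp hp
        exact hXmem q hq
      · intro ρ' hρ' hY x y hxy
        have hcoe := key _ (fun p hp => hp) ρ' hρ' hY
        obtain ⟨⟨hrefl', hsymm', htrans'⟩, _⟩ := hρ'
        rcases eq_or_ne x 1 with rfl | hx
        · rcases eq_or_ne y 1 with rfl | hy
          · exact hrefl' 1
          · obtain ⟨b, rfl⟩ := WithOne.ne_one_iff_exists.mp hy
            exact absurd ⟨b, hxy⟩ hone
        · obtain ⟨a, rfl⟩ := WithOne.ne_one_iff_exists.mp hx
          rcases eq_or_ne y 1 with rfl | hy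
          · exact absurd ⟨a, hsymm hxy⟩ hone
          · obtain ⟨b, rfl⟩ := WithOne.ne_one_iff_exists.mp hy
            exact hcoe a b hxy
  · -- backward
    intro h r hr
    obtain ⟨hL, X, hXmem, hXgen⟩ := h (liftRel r) (liftRel_congr hr)
    obtain ⟨⟨hrefl, hsymm, htrans⟩, hcomp⟩ := hr
    set f : WithOne S × WithOne S → Finset (S × S) := fun p =>
      if h : p.1 ≠ 1 ∧ p.2 ≠ 1 then {(WithOne.unone h.1, WithOne.unone h.2)} else ∅ with hf
    have hfmem : ∀ (a b : S) (p : WithOne S × WithOne S),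
        (a, b) ∈ f p ↔ p = ((a : WithOne S), (b : WithOne S)) := by
      intro a b p
      by_cases hp : p.1 ≠ 1 ∧ p.2 ≠ 1
      · rw [hf]; dsimp only
        rw [dif_pos hp, Finset.mem_singleton, Prod.ext_iff, Prod.ext_iff]
        dsimp only
        constructor
        · rintro ⟨ha, hb⟩
          exact ⟨by rw [ha, WithOne.coe_unone], by rw [hb, WithOne.coe_unone]⟩
        · rintro ⟨h1, h2⟩
          constructor
          · exact (WithOne.coe_inj.mp ((WithOne.coe_unone hp.1).trans h1)).symm
          · exact (WithOne.coe_inj.mp ((WithOne.coe_unone hp.2).trans h2)).symm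
      · rw [hf]; dsimp only
        rw [dif_neg hp]
        simp only [Finset.notMem_empty, false_iff]
        rintro rfl
        exact hp ⟨WithOne.coe_ne_one, WithOne.coe_ne_one⟩
    refine ⟨⟨⟨hrefl, hsymm, htrans⟩, hcomp⟩, X.biUnion f, ?_, ?_⟩
    · intro p hp
      obtain ⟨q, hq, hpq⟩ := Finset.mem_biUnion.mp hp
      have : q = ((p.1 : WithOne S), (p.2 : WithOne S)) := (hfmem p.1 p.2 q).mp hpq
      have hq' := hXmem q hq
      rw [this] at hq'
      rcases hq' with heq | ⟨a', b', ha', hb', hab⟩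
      · simp only [Prod.mk.injEq] at heq
        rw [WithOne.coe_inj] at heq
        exact heq ▸ hrefl p.1
      · simp only [WithOne.coe_inj] at ha' hb'
        exact ha' ▸ hb' ▸ hab
    · intro r' hr' hY a b hab
      have hlift : ∀ p ∈ X, liftRel r' p.1 p.2 := by
        intro p hp
        rcases hXmem p hp with heq | ⟨a', b', ha', hb', hab'⟩
        · exact Or.inl heq
        · refine Or.inr ⟨a', b', ha', hb', ?_⟩
          refine hY (a', b') ?_
          exact Finset.mem_biUnion.mpr ⟨p, hp, (hfmem a' b' p).mpr (Prod.ext_iff.mpr ⟨ha', hb'⟩)⟩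
      have := hXgen (liftRel r') (liftRel_congr hr') hlift (a : WithOne S) b
        (Or.inr ⟨a, b, rfl, rfl, hab⟩)
      rcases this with heq | ⟨a', b', ha', hb', hab'⟩
      · exact WithOne.coe_inj.mp heq ▸ hr'.1.1 a
      · rw [WithOne.coe_inj] at ha' hb'
        exact ha' ▸ hb' ▸ hab'
end

section
/- Let S be a semigroup with a subsemigroup T such that S \ T is a left ideal of S. If S is right noetherian, then T is right noetherian. -/
section
variable {S : Type*} [Semigroup S]

/-- One-step relation generating the right congruence closure of `q`. -/
def relStep (q : S → S → Prop) (a b : S) : Prop :=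
  q a b ∨ ∃ u v c, q u v ∧ a = u * c ∧ b = v * c

theorem closure_isRightCongruence (q : S → S → Prop) :
    ∀ a b c : S, Relation.EqvGen (relStep q) a b →
      Relation.EqvGen (relStep q) (a * c) (b * c) := by
  intro a b c hab
  induction hab with
  | rel x y hxy =>
    apply Relation.EqvGen.rel
    rcases hxy with h | ⟨u, v, d, huv, rfl, rfl⟩
    · exact Or.inr ⟨x, y, c, h, rfl, rfl⟩
    · exact Or.inr ⟨u, v, d * c, huv, by rw [mul_assoc], by rw [mul_assoc]⟩
  | refl x => exact Relation.EqvGen.refl _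
  | symm x y _ ih => exact Relation.EqvGen.symm _ _ ih
  | trans x y z _ _ ih1 ih2 => exact Relation.EqvGen.trans _ _ _ ih1 ih2

theorem closure_restrict (T : Set S) (hL : ∀ s : S, ∀ a : S, a ∉ T → s * a ∉ T)
    (q : S → S → Prop) (hq : IsRightCongruenceOn T q) :
    ∀ a b : S, Relation.EqvGen (relStep q) a b → (a ∈ T ∨ b ∈ T) →
      q a b ∧ a ∈ T ∧ b ∈ T := by
  obtain ⟨hrefl, hsymm, htrans, hmem, hcomp⟩ := hq
  intro a b hab
  induction hab with
  | rel x y hxy =>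
    intro hor
    rcases hxy with h | ⟨u, v, c, huv, rfl, rfl⟩
    · exact ⟨h, hmem _ _ h⟩
    · by_cases hc : c ∈ T
      · have := hcomp _ _ _ huv hc
        exact ⟨this, hmem _ _ this⟩
      · exfalso
        rcases hor with h' | h'
        · exact hL u c hc h'
        · exact hL v c hc h'
  | refl x =>
    intro hor
    have hx : x ∈ T := by tauto
    exact ⟨hrefl x hx, hx, hx⟩
  | symm x y _ ih =>
    intro hor
    obtain ⟨hq', hx, hy⟩ := ih (Or.symm hor)
    exact ⟨hsymm _ _ hq', hy, hx⟩
  | trans x y z _ _ ih1 ih2 =>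
    intro hor
    rcases hor with hx | hz
    · obtain ⟨h1, _, hy⟩ := ih1 (Or.inl hx)
      obtain ⟨h2, _, hz⟩ := ih2 (Or.inl hy)
      exact ⟨htrans _ _ _ h1 h2, hx, hz⟩
    · obtain ⟨h2, hy, _⟩ := ih2 (Or.inr hz)
      obtain ⟨h1, hx, _⟩ := ih1 (Or.inr hy)
      exact ⟨htrans _ _ _ h1 h2, hx, hz⟩

theorem closure_extract (q : S → S → Prop) :
    ∀ a b : S, Relation.EqvGen (relStep q) a b →
      ∃ F : Finset (S × S), (∀ p ∈ F, q p.1 p.2) ∧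
        ∀ ρ : S → S → Prop, IsRightCongruence ρ → (∀ p ∈ F, ρ p.1 p.2) → ρ a b := by
  classical
  intro a b hab
  induction hab with
  | rel x y hxy =>
    rcases hxy with h | ⟨u, v, c, huv, rfl, rfl⟩
    · exact ⟨{(x, y)}, by simpa using h,
        fun ρ _ hF => hF (x, y) (Finset.mem_singleton_self _)⟩
    · exact ⟨{(u, v)}, by simpa using huv,
        fun ρ hρ hF => hρ.2 _ _ _ (hF (u, v) (Finset.mem_singleton_self _))⟩
  | refl x => exact ⟨∅, by simp, fun ρ hρ _ => hρ.1.refl x⟩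
  | symm x y _ ih =>
    obtain ⟨F, hF, hgen⟩ := ih
    exact ⟨F, hF, fun ρ hρ hF' => hρ.1.symm (hgen ρ hρ hF')⟩
  | trans x y z _ _ ih1 ih2 =>
    obtain ⟨F1, hF1, hgen1⟩ := ih1
    obtain ⟨F2, hF2, hgen2⟩ := ih2
    refine ⟨F1 ∪ F2, ?_, fun ρ hρ hF => hρ.1.trans
      (hgen1 ρ hρ fun p hp => hF p (Finset.mem_union_left _ hp))
      (hgen2 ρ hρ fun p hp => hF p (Finset.mem_union_right _ hp))⟩
    intro p hp
    rcases Finset.mem_union.mp hp with hp | hp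
    · exact hF1 p hp
    · exact hF2 p hp

end

theorem rightNoetherianOn_of_compl_leftIdeal (S : Type*) [Semigroup S]
    (h : RightNoetherian S) (T : Set S)
    (hT : ∀ a ∈ T, ∀ b ∈ T, a * b ∈ T)
    (hL : ∀ s : S, ∀ a : S, a ∉ T → s * a ∉ T) :
    RightNoetherianOn T := by
  classical
  intro r hr
  refine ⟨hr, ?_⟩
  -- ρ : closure of r in S
  set ρ := Relation.EqvGen (relStep r) with hρdef
  have hρcong : IsRightCongruence ρ :=
    ⟨Relation.EqvGen.is_equivalence _, fun a b c hab => closure_isRightCongruence r a b c hab⟩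
  obtain ⟨_, H, hHρ, hHgen⟩ := h ρ hρcong
  -- extract r-pairs from each generator
  choose F hF hFgen using fun (p : S × S) (hp : p ∈ H) => closure_extract r p.1 p.2 (hHρ p hp)
  refine ⟨H.attach.biUnion (fun p => F p.1 p.2), ?_, ?_⟩
  · intro p hp
    simp only [Finset.mem_biUnion, Finset.mem_attach, true_and] at hp
    obtain ⟨q, hq⟩ := hp
    exact hF q.1 q.2 p hq
  · intro r' hr' hX a b hab
    -- ρ' : closure of r' in S
    set ρ' := Relation.EqvGen (relStep r') with hρ'def
    have hρ'cong : IsRightCongruence ρ' :=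
      ⟨Relation.EqvGen.is_equivalence _, fun a b c hab => closure_isRightCongruence r' a b c hab⟩
    -- ρ' contains all generators of ρ
    have hHρ' : ∀ p ∈ H, ρ' p.1 p.2 := by
      intro p hp
      refine hFgen p hp ρ' hρ'cong ?_
      intro q hq
      apply Relation.EqvGen.rel
      exact Or.inl (hX q (Finset.mem_biUnion.mpr ⟨⟨p, hp⟩, Finset.mem_attach _ _, hq⟩))
    have hsub : ∀ a b : S, ρ a b → ρ' a b := hHgen ρ' hρ'cong hHρ'
    have hmem := (hr.2.2.2.1 a b hab)
    have : ρ' a b := hsub a b (Relation.EqvGen.rel _ _ (Or.inl hab))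
    exact (closure_restrict T hL r' hr' a b this (Or.inl hmem.1)).1
end

section
/- Let S be a semigroup with a subsemigroup T such that S \ T is an ideal of S which is right noetherian as a semigroup. Then S is right noetherian if and only if T is right noetherian. -/
theorem rightNoetherian_iff_of_rightNoetherian_ideal_compl (S : Type*) [Semigroup S]
    (T : Set S) (hT : ∀ a ∈ T, ∀ b ∈ T, a * b ∈ T)
    (hideal : ∀ a : S, a ∉ T → ∀ s : S, a * s ∉ T ∧ s * a ∉ T)
    (hInoeth : RightNoetherianOn Tᶜ) :
    RightNoetherian S ↔ RightNoetherianOn T := by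
  
  classical
  constructor
  · -- S right noetherian → T right noetherian
    intro hS r hr
    obtain ⟨hrefl, hsymm, htrans, hmem, hcomp⟩ := hr
    -- the least right congruence on S containing r
    have hρc : IsRightCongruence (fun a b : S => ∀ q : S → S → Prop, IsRightCongruence q →
        (∀ x y : S, r x y → q x y) → q a b) := by
      refine ⟨⟨?_, ?_, ?_⟩, ?_⟩
      · intro a q hq _; exact hq.1.refl a
      · intro a b hab q hq hqr
        exact hab (fun x y => q y x)
          ⟨⟨fun x => hq.1.refl x, fun h => hq.1.symm h, fun h1 h2 => hq.1.trans h2 h1⟩,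
            fun u v c h => hq.2 v u c h⟩
          (fun x y hxy => hqr y x (hsymm x y hxy))
      · intro a b c hab hbc q hq hqr
        exact hq.1.trans (hab q hq hqr) (hbc q hq hqr)
      · intro a b c hab q hq hqr
        exact hq.2 a b c (hab q hq hqr)
    obtain ⟨-, X, hX1, hX2⟩ := hS _ hρc
    have hρle : ∀ a b : S, (∀ q : S → S → Prop, IsRightCongruence q →
        (∀ x y : S, r x y → q x y) → q a b) → (r a b ∨ a = b ∨ (a ∉ T ∧ b ∉ T)) := by
      intro a b hab
      refine hab (fun x y => r x y ∨ x = y ∨ (x ∉ T ∧ y ∉ T)) ⟨⟨?_, ?_, ?_⟩, ?_⟩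
        (fun x y h => Or.inl h)
      · intro x; exact Or.inr (Or.inl rfl)
      · rintro x y (h | h | h)
        · exact Or.inl (hsymm _ _ h)
        · exact Or.inr (Or.inl h.symm)
        · exact Or.inr (Or.inr ⟨h.2, h.1⟩)
      · rintro x y z (h1 | rfl | h1) (h2 | rfl | h2)
        · exact Or.inl (htrans _ _ _ h1 h2)
        · exact Or.inl h1
        · exact absurd (hmem _ _ h1).2 h2.1
        · exact Or.inl h2
        · exact Or.inr (Or.inl rfl)
        · exact Or.inr (Or.inr h2)
        · exact absurd (hmem _ _ h2).1 h1.2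
        · exact Or.inr (Or.inr h1)
        · exact Or.inr (Or.inr ⟨h1.1, h2.2⟩)
      · rintro x y c (h | rfl | h)
        · by_cases hc : c ∈ T
          · exact Or.inl (hcomp _ _ _ h hc)
          · exact Or.inr (Or.inr ⟨(hideal c hc x).2, (hideal c hc y).2⟩)
        · exact Or.inr (Or.inl rfl)
        · exact Or.inr (Or.inr ⟨(hideal x h.1 c).1, (hideal y h.2 c).1⟩)
    refine ⟨⟨hrefl, hsymm, htrans, hmem, hcomp⟩, X.filter (fun p => p.1 ∈ T), ?_, ?_⟩
    · intro p hp
      rw [Finset.mem_filter] at hp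
      rcases hρle _ _ (hX1 p hp.1) with h | h | h
      · exact h
      · exact h ▸ hrefl p.1 hp.2
      · exact absurd hp.2 h.1
    · intro r' hr' hr'X a b hab
      have hr1 : IsRightCongruence (fun x y : S =>
          (x ∈ T ∧ y ∈ T ∧ r' x y) ∨ x = y ∨ (x ∉ T ∧ y ∉ T)) := by
        refine ⟨⟨?_, ?_, ?_⟩, ?_⟩
        · intro x; exact Or.inr (Or.inl rfl)
        · rintro x y (h | h | h)
          · exact Or.inl ⟨h.2.1, h.1, hr'.2.1 _ _ h.2.2⟩
          · exact Or.inr (Or.inl h.symm)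
          · exact Or.inr (Or.inr ⟨h.2, h.1⟩)
        · rintro x y z (h1 | rfl | h1) (h2 | rfl | h2)
          · exact Or.inl ⟨h1.1, h2.2.1, hr'.2.2.1 _ _ _ h1.2.2 h2.2.2⟩
          · exact Or.inl h1
          · exact absurd h1.2.1 h2.1
          · exact Or.inl h2
          · exact Or.inr (Or.inl rfl)
          · exact Or.inr (Or.inr h2)
          · exact absurd h2.1 h1.2
          · exact Or.inr (Or.inr h1)
          · exact Or.inr (Or.inr ⟨h1.1, h2.2⟩)
        · rintro x y c (h | rfl | h)
          · by_cases hc : c ∈ T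
            · exact Or.inl ⟨hT x h.1 c hc, hT y h.2.1 c hc, hr'.2.2.2.2 _ _ _ h.2.2 hc⟩
            · exact Or.inr (Or.inr ⟨(hideal c hc x).2, (hideal c hc y).2⟩)
          · exact Or.inr (Or.inl rfl)
          · exact Or.inr (Or.inr ⟨(hideal x h.1 c).1, (hideal y h.2 c).1⟩)
      have hX1' : ∀ p ∈ X, (p.1 ∈ T ∧ p.2 ∈ T ∧ r' p.1 p.2) ∨ p.1 = p.2 ∨
          (p.1 ∉ T ∧ p.2 ∉ T) := by
        intro p hp
        rcases hρle _ _ (hX1 p hp) with h | h | h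
        · have hm := hmem _ _ h
          exact Or.inl ⟨hm.1, hm.2, hr'X p (Finset.mem_filter.mpr ⟨hp, hm.1⟩)⟩
        · exact Or.inr (Or.inl h)
        · exact Or.inr (Or.inr h)
      have hρab : ∀ q : S → S → Prop, IsRightCongruence q →
          (∀ x y : S, r x y → q x y) → q a b := fun q hq hqr => hqr a b hab
      have := hX2 _ hr1 hX1' a b hρab
      have hm := hmem _ _ hab
      rcases this with h | h | h
      · exact h.2.2
      · exact h ▸ hr'.1 a hm.1
      · exact absurd hm.1 h.1
  · -- T right noetherian (and I right noetherian) → S right noetherian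
    intro hTn ρ hρ
    obtain ⟨⟨hρr, hρs, hρt⟩, hρc⟩ := hρ
    -- restriction to T
    have hρT : IsRightCongruenceOn T (fun a b : S => a ∈ T ∧ b ∈ T ∧ ρ a b) := by
      refine ⟨fun a ha => ⟨ha, ha, hρr a⟩, fun a b h => ⟨h.2.1, h.1, hρs h.2.2⟩,
        fun a b c h1 h2 => ⟨h1.1, h2.2.1, hρt h1.2.2 h2.2.2⟩,
        fun a b h => ⟨h.1, h.2.1⟩,
        fun a b c h hc => ⟨hT a h.1 c hc, hT b h.2.1 c hc, hρc a b c h.2.2⟩⟩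
    obtain ⟨-, H, hH1, hH2⟩ := hTn _ hρT
    -- restriction to I = Tᶜ
    have hρI : IsRightCongruenceOn Tᶜ (fun a b : S => a ∉ T ∧ b ∉ T ∧ ρ a b) := by
      refine ⟨fun a ha => ⟨ha, ha, hρr a⟩, fun a b h => ⟨h.2.1, h.1, hρs h.2.2⟩,
        fun a b c h1 h2 => ⟨h1.1, h2.2.1, hρt h1.2.2 h2.2.2⟩,
        fun a b h => ⟨h.1, h.2.1⟩,
        fun a b c h hc => ⟨(hideal a h.1 c).1, (hideal b h.2.1 c).1, hρc a b c h.2.2⟩⟩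
    obtain ⟨-, K, hK1, hK2⟩ := hInoeth _ hρI
    -- the congruence on T merging all classes that meet I
    have hlam : IsRightCongruenceOn T (fun t t' : S =>
        (t ∈ T ∧ t' ∈ T ∧ ρ t t') ∨
        ((t ∈ T ∧ ∃ i, i ∉ T ∧ ρ t i) ∧ (t' ∈ T ∧ ∃ i, i ∉ T ∧ ρ t' i))) := by
      refine ⟨?_, ?_, ?_, ?_, ?_⟩
      · intro a ha; exact Or.inl ⟨ha, ha, hρr a⟩
      · rintro a b (h | h)
        · exact Or.inl ⟨h.2.1, h.1, hρs h.2.2⟩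
        · exact Or.inr ⟨h.2, h.1⟩
      · rintro a b c (h1 | h1) (h2 | h2)
        · exact Or.inl ⟨h1.1, h2.2.1, hρt h1.2.2 h2.2.2⟩
        · obtain ⟨i, hi, hbi⟩ := h2.1.2
          exact Or.inr ⟨⟨h1.1, i, hi, hρt h1.2.2 hbi⟩, h2.2⟩
        · obtain ⟨i, hi, hbi⟩ := h1.2.2
          exact Or.inr ⟨h1.1, ⟨h2.2.1, i, hi, hρt (hρs h2.2.2) hbi⟩⟩
        · exact Or.inr ⟨h1.1, h2.2⟩
      · rintro a b (h | h)
        · exact ⟨h.1, h.2.1⟩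
        · exact ⟨h.1.1, h.2.1⟩
      · rintro a b c (h | h) hc
        · exact Or.inl ⟨hT a h.1 c hc, hT b h.2.1 c hc, hρc a b c h.2.2⟩
        · obtain ⟨i, hi, hai⟩ := h.1.2
          obtain ⟨j, hj, hbj⟩ := h.2.2
          exact Or.inr ⟨⟨hT a h.1.1 c hc, i * c, (hideal i hi c).1, hρc a i c hai⟩,
            ⟨hT b h.2.1 c hc, j * c, (hideal j hj c).1, hρc b j c hbj⟩⟩
    obtain ⟨-, L, hL1, hL2⟩ := hTn _ hlam
    -- choose a witness in I for each element whose class meets I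
    set g : S → S := fun u => if h : ∃ i, i ∉ T ∧ ρ u i then h.choose else u with hgdef
    have hg : ∀ u : S, ρ u (g u) ∧ ((∃ i, i ∉ T ∧ ρ u i) → g u ∉ T) := by
      intro u
      by_cases h : ∃ i, i ∉ T ∧ ρ u i
      · have hgu : g u = h.choose := dif_pos h
        rw [hgu]
        exact ⟨h.choose_spec.2, fun _ => h.choose_spec.1⟩
      · have hgu : g u = u := dif_neg h
        rw [hgu]
        exact ⟨hρr u, fun h' => absurd h' h⟩
    set base : Finset (S × S) :=
      if h : ∃ p : S × S, p.1 ∈ T ∧ p.2 ∉ T ∧ ρ p.1 p.2 then {h.choose} else ∅ with hbdef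
    set X : Finset (S × S) :=
      H ∪ K ∪ L.image (fun p => (p.1, g p.1)) ∪ L.image (fun p => (p.2, g p.2)) ∪ base
      with hXdef
    have hXρ : ∀ p ∈ X, ρ p.1 p.2 := by
      intro p hp
      rw [hXdef] at hp
      simp only [Finset.mem_union, Finset.mem_image] at hp
      rcases hp with ((((hp | hp) | hp) | hp) | hp)
      · exact (hH1 p hp).2.2
      · exact (hK1 p hp).2.2
      · obtain ⟨q, hq, rfl⟩ := hp
        exact (hg q.1).1
      · obtain ⟨q, hq, rfl⟩ := hp
        exact (hg q.2).1
      · rw [hbdef] at hp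
        by_cases h : ∃ p : S × S, p.1 ∈ T ∧ p.2 ∉ T ∧ ρ p.1 p.2
        · rw [dif_pos h, Finset.mem_singleton] at hp
          exact hp ▸ h.choose_spec.2.2
        · rw [dif_neg h] at hp
          exact absurd hp (Finset.notMem_empty p)
    refine ⟨⟨⟨hρr, @hρs, @hρt⟩, hρc⟩, X, hXρ, ?_⟩
    intro r' hr' hr'X a b hab
    -- work with r'' = r' ∩ ρ
    have hr''r : ∀ x : S, r' x x ∧ ρ x x := fun x => ⟨hr'.1.refl x, hρr x⟩
    have hr''s : ∀ x y : S, r' x y ∧ ρ x y → r' y x ∧ ρ y x :=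
      fun x y h => ⟨hr'.1.symm h.1, hρs h.2⟩
    have hr''t : ∀ x y z : S, r' x y ∧ ρ x y → r' y z ∧ ρ y z → r' x z ∧ ρ x z :=
      fun x y z h1 h2 => ⟨hr'.1.trans h1.1 h2.1, hρt h1.2 h2.2⟩
    have hr''c : ∀ x y c : S, r' x y ∧ ρ x y → r' (x * c) (y * c) ∧ ρ (x * c) (y * c) :=
      fun x y c h => ⟨hr'.2 x y c h.1, hρc x y c h.2⟩
    have hr''X : ∀ p ∈ X, r' p.1 p.2 ∧ ρ p.1 p.2 := fun p hp => ⟨hr'X p hp, hXρ p hp⟩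
    -- pairs inside T
    have hTstep : ∀ x y : S, x ∈ T → y ∈ T → ρ x y → r' x y ∧ ρ x y := by
      intro x y hx hy hxy
      have h := hH2 (fun u v => u ∈ T ∧ v ∈ T ∧ (r' u v ∧ ρ u v))
        ⟨fun u hu => ⟨hu, hu, hr''r u⟩,
         fun u v h => ⟨h.2.1, h.1, hr''s u v h.2.2⟩,
         fun u v w h1 h2 => ⟨h1.1, h2.2.1, hr''t u v w h1.2.2 h2.2.2⟩,
         fun u v h => ⟨h.1, h.2.1⟩,
         fun u v c h hc => ⟨hT u h.1 c hc, hT v h.2.1 c hc, hr''c u v c h.2.2⟩⟩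
        (fun p hp => ⟨(hH1 p hp).1, (hH1 p hp).2.1,
          hr''X p (by rw [hXdef]; simp only [Finset.mem_union]; tauto)⟩)
        x y ⟨hx, hy, hxy⟩
      exact h.2.2
    -- pairs inside I
    have hIstep : ∀ x y : S, x ∉ T → y ∉ T → ρ x y → r' x y ∧ ρ x y := by
      intro x y hx hy hxy
      have h := hK2 (fun u v => u ∉ T ∧ v ∉ T ∧ (r' u v ∧ ρ u v))
        ⟨fun u hu => ⟨hu, hu, hr''r u⟩,
         fun u v h => ⟨h.2.1, h.1, hr''s u v h.2.2⟩,
         fun u v w h1 h2 => ⟨h1.1, h2.2.1, hr''t u v w h1.2.2 h2.2.2⟩,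
         fun u v h => ⟨h.1, h.2.1⟩,
         fun u v c h hc => ⟨(hideal u h.1 c).1, (hideal v h.2.1 c).1, hr''c u v c h.2.2⟩⟩
        (fun p hp => ⟨(hK1 p hp).1, (hK1 p hp).2.1,
          hr''X p (by rw [hXdef]; simp only [Finset.mem_union]; tauto)⟩)
        x y ⟨hx, hy, hxy⟩
      exact h.2.2
    -- the congruence θ on T: related by r'' or both have an r''-witness in I
    have hθ : ∀ x y : S, ((x ∈ T ∧ y ∈ T ∧ ρ x y) ∨
        ((x ∈ T ∧ ∃ i, i ∉ T ∧ ρ x i) ∧ (y ∈ T ∧ ∃ i, i ∉ T ∧ ρ y i))) →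
        ((x ∈ T ∧ y ∈ T ∧ (r' x y ∧ ρ x y)) ∨
         ((x ∈ T ∧ ∃ i, i ∉ T ∧ (r' x i ∧ ρ x i)) ∧
          (y ∈ T ∧ ∃ i, i ∉ T ∧ (r' y i ∧ ρ y i)))) := by
      refine hL2 _ ⟨?_, ?_, ?_, ?_, ?_⟩ ?_
      · intro u hu; exact Or.inl ⟨hu, hu, hr''r u⟩
      · rintro u v (h | h)
        · exact Or.inl ⟨h.2.1, h.1, hr''s u v h.2.2⟩
        · exact Or.inr ⟨h.2, h.1⟩
      · rintro u v w (h1 | h1) (h2 | h2)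
        · exact Or.inl ⟨h1.1, h2.2.1, hr''t u v w h1.2.2 h2.2.2⟩
        · obtain ⟨i, hi, hvi⟩ := h2.1.2
          exact Or.inr ⟨⟨h1.1, i, hi, hr''t u v i h1.2.2 hvi⟩, h2.2⟩
        · obtain ⟨i, hi, hvi⟩ := h1.2.2
          exact Or.inr ⟨h1.1, ⟨h2.2.1, i, hi, hr''t w v i (hr''s v w h2.2.2) hvi⟩⟩
        · exact Or.inr ⟨h1.1, h2.2⟩
      · rintro u v (h | h)
        · exact ⟨h.1, h.2.1⟩
        · exact ⟨h.1.1, h.2.1⟩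
      · rintro u v c (h | h) hc
        · exact Or.inl ⟨hT u h.1 c hc, hT v h.2.1 c hc, hr''c u v c h.2.2⟩
        · obtain ⟨i, hi, hui⟩ := h.1.2
          obtain ⟨j, hj, hvj⟩ := h.2.2
          exact Or.inr ⟨⟨hT u h.1.1 c hc, i * c, (hideal i hi c).1, hr''c u i c hui⟩,
            ⟨hT v h.2.1 c hc, j * c, (hideal j hj c).1, hr''c v j c hvj⟩⟩
      · intro p hp
        rcases hL1 p hp with h | h
        · exact Or.inl ⟨h.1, h.2.1, hTstep _ _ h.1 h.2.1 h.2.2⟩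
        · refine Or.inr ⟨⟨h.1.1, g p.1, (hg p.1).2 h.1.2, ?_⟩,
            ⟨h.2.1, g p.2, (hg p.2).2 h.2.2, ?_⟩⟩
          · exact hr''X (p.1, g p.1)
              (by rw [hXdef]; simp only [Finset.mem_union, Finset.mem_image]
                  exact Or.inl (Or.inl (Or.inr ⟨p, hp, rfl⟩)))
          · exact hr''X (p.2, g p.2)
              (by rw [hXdef]; simp only [Finset.mem_union, Finset.mem_image]
                  exact Or.inl (Or.inr ⟨p, hp, rfl⟩))
    -- mixed pairs
    have hmix : ∀ x y : S, x ∈ T → y ∉ T → ρ x y → r' x y ∧ ρ x y := by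
      intro x y hx hy hxy
      have hbase : ∃ p : S × S, p.1 ∈ T ∧ p.2 ∉ T ∧ ρ p.1 p.2 := ⟨(x, y), hx, hy, hxy⟩
      have hp₀X : hbase.choose ∈ X := by
        rw [hXdef]
        refine Finset.mem_union_right _ ?_
        rw [hbdef, dif_pos hbase]
        exact Finset.mem_singleton_self _
      have hp₀s := hbase.choose_spec
      have hr''p₀ := hr''X _ hp₀X
      have hθ' := hθ x hbase.choose.1
        (Or.inr ⟨⟨hx, y, hy, hxy⟩, ⟨hp₀s.1, hbase.choose.2, hp₀s.2.1, hp₀s.2.2⟩⟩)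
      have hWx : ∃ i, i ∉ T ∧ (r' x i ∧ ρ x i) := by
        rcases hθ' with ⟨-, -, h⟩ | ⟨hWx, -⟩
        · exact ⟨hbase.choose.2, hp₀s.2.1, hr''t _ _ _ h hr''p₀⟩
        · exact hWx.2
      obtain ⟨i, hi, hxi⟩ := hWx
      have hiy : ρ i y := hρt (hρs hxi.2) hxy
      exact hr''t _ _ _ hxi (hIstep i y hi hy hiy)
    by_cases ha : a ∈ T <;> by_cases hb : b ∈ T
    · exact (hTstep a b ha hb hab).1
    · exact (hmix a b ha hb hab).1
    · exact hr'.1.symm (hmix b a hb ha (hρs hab)).1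
    · exact (hIstep a b ha hb hab).1
end

section
/- Let S be a right noetherian semigroup and X a subset of S. Then the right stabiliser Stab_R(X) = {s ∈ S¹ : Xs = X} is a right noetherian monoid. -/
/-!
Given a right congruence `ρ` on `T = Stab_R(X) ⊆ S¹`, let `σ` be the right congruence on `S`
generated by the pairs `(uc, vc)` with `u ρ v` and `c ∈ S¹`. As `S` is right noetherian, `σ` is
generated by finitely many pairs, each of which is witnessed by a finite chain of elementary
steps, so finitely many `ρ`-pairs already generate `σ ⊇ ρ|_S`. The
stabiliser is left unitary (`u, uc ∈ T` forces `c ∈ T`), so a chain of elementary steps starting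
in `T` stays in `T`, and any right congruence on `T` containing these pairs contains `ρ` on `S`.
One further pair `(1, b)` takes care of the class of `1`.
-/

open Relation

/-- A single step of the right congruence on `S` generated by the pairs `(uc, vc)` with
`(u, v) ∈ P`, `c ∈ S¹` and `uc, vc ∈ S`; that congruence is the reflexive transitive closure. -/
def ElementaryStep {S : Type*} [Semigroup S] (P : Set (WithOne S × WithOne S)) (a b : S) :
    Prop :=
  ∃ u v c : WithOne S, ((u, v) ∈ P ∨ (v, u) ∈ P) ∧
    (a : WithOne S) = u * c ∧ (b : WithOne S) = v * c

def IsLeftUnitary {M : Type*} [Mul M] (T : Set M) : Prop :=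
  ∀ u c : M, u ∈ T → u * c ∈ T → c ∈ T

namespace ElementaryStep

variable {S : Type*} [Semigroup S] {P Q : Set (WithOne S × WithOne S)} {a b : S}

instance : Std.Symm (ElementaryStep P) where
  symm _ _ := fun ⟨u, v, c, hp, ha, hb⟩ => ⟨v, u, c, hp.symm, hb, ha⟩

theorem mul_right (h : ElementaryStep P a b) (d : S) : ElementaryStep P (a * d) (b * d) := by
  obtain ⟨u, v, c, hp, ha, hb⟩ := h
  exact ⟨u, v, c * d, hp, by rw [WithOne.coe_mul, ha, mul_assoc],
    by rw [WithOne.coe_mul, hb, mul_assoc]⟩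

theorem mono (hPQ : P ⊆ Q) (h : ElementaryStep P a b) : ElementaryStep Q a b := by
  obtain ⟨u, v, c, hp, ha, hb⟩ := h
  exact ⟨u, v, c, hp.imp (@hPQ _) (@hPQ _), ha, hb⟩

theorem of_mem {u v : S} (h : ((u : WithOne S), (v : WithOne S)) ∈ P) : ElementaryStep P u v :=
  ⟨u, v, 1, .inl h, (mul_one _).symm, (mul_one _).symm⟩

theorem reflTransGen_mono (hPQ : P ⊆ Q) (h : ReflTransGen (ElementaryStep P) a b) :
    ReflTransGen (ElementaryStep Q) a b :=
  ReflTransGen.mono (fun _ _ => mono hPQ) a b h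

theorem exists_mem_singleton (h : ElementaryStep P a b) :
    ∃ p ∈ P, ElementaryStep {p} a b := by
  obtain ⟨u, v, c, hp | hp, ha, hb⟩ := h
  · exact ⟨(u, v), hp, u, v, c, .inl rfl, ha, hb⟩
  · exact ⟨(v, u), hp, u, v, c, .inr rfl, ha, hb⟩

theorem isRightCongruence_reflTransGen (P : Set (WithOne S × WithOne S)) :
    IsRightCongruence (ReflTransGen (ElementaryStep P)) :=
  ⟨⟨fun _ => .refl, Std.Symm.symm _ _, .trans⟩,
    fun a b c => ReflTransGen.lift (· * c) (fun _ _ h => mul_right h c) a b⟩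

theorem exists_finset_reflTransGen (h : ReflTransGen (ElementaryStep P) a b) :
    ∃ Q : Finset (WithOne S × WithOne S), ↑Q ⊆ P ∧
      ReflTransGen (ElementaryStep ↑Q) a b := by
  classical
  induction h with
  | refl => exact ⟨∅, by simp, .refl⟩
  | tail _ step ih =>
    obtain ⟨Q, hQP, hchain⟩ := ih
    obtain ⟨p, hp, hstep⟩ := step.exists_mem_singleton
    refine ⟨insert p Q, ?_, ?_⟩
    · simpa [Set.insert_subset_iff] using ⟨hp, hQP⟩
    · exact (reflTransGen_mono (by simp) hchain).tail (hstep.mono (by simp))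

theorem exists_finset_forall_reflTransGen (F : Finset (S × S))
    (hF : ∀ p ∈ F, ReflTransGen (ElementaryStep P) p.1 p.2) :
    ∃ Q : Finset (WithOne S × WithOne S), ↑Q ⊆ P ∧
      ∀ p ∈ F, ReflTransGen (ElementaryStep ↑Q) p.1 p.2 := by
  classical
  choose! Q hQP hQ using fun p hp => exists_finset_reflTransGen (hF p hp)
  refine ⟨F.biUnion Q, by simpa using hQP, fun p hp => ?_⟩
  exact reflTransGen_mono (Finset.coe_subset.mpr (Finset.subset_biUnion_of_mem Q hp)) (hQ p hp)

end ElementaryStep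

section LeftUnitary

variable {S : Type*} [Semigroup S] {T : Set (WithOne S)}

theorem isLeftUnitary_stabiliser (X : Set S) :
    IsLeftUnitary {m : WithOne S | (· * m) '' (WithOne.coe '' X) = WithOne.coe '' X} := by
  intro u c (hu : _ = _) (huc : _ = _)
  calc (· * c) '' (WithOne.coe '' X) = (· * c) '' ((· * u) '' (WithOne.coe '' X)) := by rw [hu]
    _ = (· * (u * c)) '' (WithOne.coe '' X) := by simp only [Set.image_image, mul_assoc]
    _ = WithOne.coe '' X := huc

/-- Along the chain, `uc ∈ T` and `u ∈ T` give `c ∈ T` by left unitarity, so the step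
from `uc` to `vc` is an `r'`-step. -/
theorem IsRightCongruenceOn.of_reflTransGen_elementaryStep (hT : IsLeftUnitary T)
    {r' : WithOne S → WithOne S → Prop} (hr' : IsRightCongruenceOn T r')
    {G : Set (WithOne S × WithOne S)} (hG : ∀ p ∈ G, r' p.1 p.2) {a b : S}
    (hab : ReflTransGen (ElementaryStep G) a b) (ha : (a : WithOne S) ∈ T) : r' a b := by
  obtain ⟨hrefl, hsymm, htrans, hmem, hmul⟩ := hr'
  induction hab with
  | refl => exact hrefl _ ha
  | tail _ step ih =>
    obtain ⟨u, v, c, hp, hb, hc⟩ := step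
    have huv : r' u v := hp.elim (hG _) (fun h => hsymm _ _ (hG _ h))
    have hcT : c ∈ T := hT u c (hmem _ _ huv).1 (hb ▸ (hmem _ _ ih).2)
    exact htrans _ _ _ ih (hb ▸ hc ▸ hmul _ _ _ huv hcT)

theorem IsRightCongruenceOn.le_of_forall_coe {ρ r' : WithOne S → WithOne S → Prop}
    (hρ : IsRightCongruenceOn T ρ) (hr' : IsRightCongruenceOn T r')
    (hcoe : ∀ a b : S, ρ a b → r' a b)
    (hone : ∀ w : S, ρ 1 w → ∃ b : S, ρ 1 b ∧ r' 1 b) :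
    ∀ u v, ρ u v → r' u v := by
  obtain ⟨-, hρsymm, hρtrans, hρmem, -⟩ := hρ
  obtain ⟨hrefl, hsymm, htrans, -, -⟩ := hr'
  have hone' : ∀ w, ρ 1 w → r' 1 w := by
    intro w hw
    cases w with
    | one => exact hrefl 1 (hρmem _ _ hw).1
    | coe c =>
      obtain ⟨b, hρb, hr'b⟩ := hone c hw
      exact htrans _ _ _ hr'b (hcoe b c (hρtrans _ _ _ (hρsymm _ _ hρb) hw))
  intro u v huv
  cases u with
  | one => exact hone' v huv
  | coe a =>
    cases v with
    | one => exact hsymm _ _ (hone' a (hρsymm _ _ huv))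
    | coe b => exact hcoe a b huv

theorem rightNoetherianOn_of_isLeftUnitary (hS : RightNoetherian S) (hT : IsLeftUnitary T) :
    RightNoetherianOn T := by
  classical
  intro ρ hρ
  refine ⟨hρ, ?_⟩
  set R : Set (WithOne S × WithOne S) := {p | ρ p.1 p.2}
  obtain ⟨-, F, hF, hFmin⟩ :=
    hS (ReflTransGen (ElementaryStep R)) (ElementaryStep.isRightCongruence_reflTransGen R)
  obtain ⟨Q, hQR, hFQ⟩ := ElementaryStep.exists_finset_forall_reflTransGen F hF
  have hcover (a b : S) (hab : ρ a b) : ReflTransGen (ElementaryStep ↑Q) a b :=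
    hFmin _ (ElementaryStep.isRightCongruence_reflTransGen _) hFQ a b
      (.single (.of_mem (P := R) hab))
  obtain ⟨Q₁, hQ₁R, hQ₁⟩ : ∃ Q₁ : Finset (WithOne S × WithOne S), ↑Q₁ ⊆ R ∧
      ∀ w : S, ρ 1 w → ∃ b : S, ρ 1 b ∧ (1, (b : WithOne S)) ∈ Q₁ := by
    by_cases h : ∃ w : S, ρ 1 w
    · obtain ⟨b, hb⟩ := h
      exact ⟨{((1 : WithOne S), (b : WithOne S))}, by simpa [R] using hb,
        fun _ _ => ⟨b, hb, by simp⟩⟩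
    · exact ⟨∅, by simp, fun w hw => (h ⟨w, hw⟩).elim⟩
  have hGR : ↑(Q ∪ Q₁) ⊆ R := by simpa using Set.union_subset hQR hQ₁R
  refine ⟨Q ∪ Q₁, fun p hp => hGR hp, fun r' hr' hG => hρ.le_of_forall_coe hr' ?_ ?_⟩
  · exact fun a b hab => hr'.of_reflTransGen_elementaryStep hT
      (fun p hp => hG p (Finset.mem_union_left _ hp)) (hcover a b hab) (hρ.2.2.2.1 _ _ hab).1
  · intro w hw
    obtain ⟨b, hb, hbQ₁⟩ := hQ₁ w hw
    exact ⟨b, hb, hG _ (Finset.mem_union_right _ hbQ₁)⟩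

end LeftUnitary

theorem rightNoetherian_stabiliser (S : Type*) [Semigroup S]
    (h : RightNoetherian S) (X : Set S) :
    RightNoetherianOn
      {m : WithOne S |
        (fun x => x * m) '' (WithOne.coe '' X) = WithOne.coe '' X} :=
  rightNoetherianOn_of_isLeftUnitary h (isLeftUnitary_stabiliser X)
end

section
/- If S is a right noetherian semigroup and G is a subgroup of S (a subsemigroup that is a group), then every subgroup of G is finitely generated. -/
private lemma aux_rcong {S G : Type*} [Semigroup S] [Group G] (f : G → S)
    (hf : ∀ a b : G, f (a * b) = f a * f b) (K : Subgroup G) :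
    IsRightCongruence (fun a b : S =>
      a = b ∨ ∃ h h' : G, h ∈ K ∧ h' ∈ K ∧ f h * a = f h' * b) := by
  constructor
  · constructor
    · intro a; exact Or.inl rfl
    · rintro a b (rfl | ⟨h, h', hh, hh', heq⟩)
      · exact Or.inl rfl
      · exact Or.inr ⟨h', h, hh', hh, heq.symm⟩
    · rintro a b c (rfl | ⟨h, h', hh, hh', heq⟩) hbc
      · exact hbc
      · rcases hbc with rfl | ⟨k, k', hk, hk', heq2⟩
        · exact Or.inr ⟨h, h', hh, hh', heq⟩
        · refine Or.inr ⟨k * h'⁻¹ * h, k', mul_mem (mul_mem hk (inv_mem hh')) hh, hk', ?_⟩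
          have e1 : f (k * h'⁻¹ * h) * a = f (k * h'⁻¹) * (f h * a) := by
            rw [hf, mul_assoc]
          have e2 : f (k * h'⁻¹) * (f h' * b) = f k * b := by
            rw [← mul_assoc, ← hf]
            simp
          rw [e1, heq, e2, heq2]
  · rintro a b c (rfl | ⟨h, h', hh, hh', heq⟩)
    · exact Or.inl rfl
    · exact Or.inr ⟨h, h', hh, hh', by rw [← mul_assoc, ← mul_assoc, heq]⟩

theorem subgroups_fg_of_rightNoetherian (S G : Type*) [Semigroup S] [Group G]
    (h : RightNoetherian S) (f : G → S)
    (hf : ∀ a b : G, f (a * b) = f a * f b) (hinj : Function.Injective f) :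
    ∀ H : Subgroup G, H.FG := by
  intro H
  classical
  set r : S → S → Prop := fun a b =>
    a = b ∨ ∃ h h' : G, h ∈ H ∧ h' ∈ H ∧ f h * a = f h' * b with hr
  obtain ⟨-, X, hX1, hX2⟩ := h r (aux_rcong f hf H)
  -- choose witnesses
  set P : S × S → Prop := fun p =>
    ∃ q : G × G, q.1 ∈ H ∧ q.2 ∈ H ∧ f q.1 * p.1 = f q.2 * p.2 with hP
  set g : S × S → G × G := fun p => if hp : P p then hp.choose else (1, 1) with hg
  have hgspec : ∀ p, P p → (g p).1 ∈ H ∧ (g p).2 ∈ H ∧ f (g p).1 * p.1 = f (g p).2 * p.2 := by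
    intro p hp
    simp only [hg, dif_pos hp]
    exact hp.choose_spec
  set T : Finset G := (X.image fun p => (g p).1) ∪ (X.image fun p => (g p).2) with hT
  set K : Subgroup G := Subgroup.closure (T : Set G) with hK
  have hTH : (T : Set G) ⊆ (H : Set G) := by
    intro x hx
    simp only [hT, Finset.coe_union, Set.mem_union, Finset.coe_image, Set.mem_image,
      Finset.mem_coe] at hx
    rcases hx with ⟨p, hp, rfl⟩ | ⟨p, hp, rfl⟩ <;>
    · by_cases hPp : P p
      · first
        | exact (hgspec p hPp).1
        | exact (hgspec p hPp).2.1
      · simp only [hg, dif_neg hPp]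
        exact H.one_mem
  have hKH : K ≤ H := (Subgroup.closure_le H).mpr hTH
  have hHK : H ≤ K := by
    intro x hx
    set r' : S → S → Prop := fun a b =>
      a = b ∨ ∃ h h' : G, h ∈ K ∧ h' ∈ K ∧ f h * a = f h' * b with hr'
    have hX' : ∀ p ∈ X, r' p.1 p.2 := by
      intro p hp
      rcases hX1 p hp with heq | ⟨a, b, ha, hb, hab⟩
      · exact Or.inl heq
      · have hPp : P p := ⟨(a, b), ha, hb, hab⟩
        obtain ⟨h1, h2, h3⟩ := hgspec p hPp
        refine Or.inr ⟨(g p).1, (g p).2, ?_, ?_, h3⟩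
        · refine Subgroup.subset_closure ?_
          simp only [hT, Finset.coe_union, Set.mem_union, Finset.coe_image, Set.mem_image,
            Finset.mem_coe]
          exact Or.inl ⟨p, hp, rfl⟩
        · refine Subgroup.subset_closure ?_
          simp only [hT, Finset.coe_union, Set.mem_union, Finset.coe_image, Set.mem_image,
            Finset.mem_coe]
          exact Or.inr ⟨p, hp, rfl⟩
    have hrel : r (f x) (f 1) := by
      refine Or.inr ⟨1, x, H.one_mem, hx, ?_⟩
      rw [← hf, ← hf, one_mul, mul_one]
    have := hX2 r' (aux_rcong f hf K) hX' (f x) (f 1) hrel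
    rcases this with heq | ⟨k, k', hk, hk', hkeq⟩
    · have : x = 1 := hinj heq
      rw [this]; exact K.one_mem
    · rw [← hf, ← hf] at hkeq
      have : k * x = k' * 1 := hinj hkeq
      rw [mul_one] at this
      have : x = k⁻¹ * k' := by rw [← this]; group
      rw [this]
      exact mul_mem (inv_mem hk) hk'
  have : H = K := le_antisymm hHK hKH
  exact (Subgroup.fg_iff H).mpr ⟨(T : Set G), by rw [this, hK], T.finite_toSet⟩
end

section
/- If S is a right noetherian semigroup and T is an inverse subsemigroup of S, then the semilattice of idempotents of T is finite. -/
/-! Idempotents of an inverse subsemigroup commute. In a right noetherian semigroup the right ideal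
`E S¹` generated by an infinite set `E` of idempotents is finitely generated (its Rees right
congruence is), so by pigeonhole some `f ∈ E` lies above infinitely many other elements of `E`.
For commuting idempotents this yields an infinite strictly descending chain `c₀ > c₁ > ⋯`, which is
impossible: the right congruence `a ρ b ↔ ∃ n, cₙ a = cₙ b` would be generated by finitely many
pairs, all identified by a single `c_N`, whereas `c_N ρ c_{N+1}` and `c_N c_N ≠ c_N c_{N+1}`. -/

def IsInverseSubsemigroup {S : Type*} [Semigroup S] (T : Set S) : Prop :=
  (∀ a ∈ T, ∀ b ∈ T, a * b ∈ T) ∧ ∀ a ∈ T, ∃! b : S, b ∈ T ∧ a * b * a = a ∧ b * a * b = b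

section

variable {S : Type*} [Semigroup S]

namespace IsInverseSubsemigroup

variable {T : Set S}

theorem isIdempotentElem_mul (hT : IsInverseSubsemigroup T) {e f : S} (he : e ∈ T)
    (he' : IsIdempotentElem e) (hf : f ∈ T) (hf' : IsIdempotentElem f) :
    IsIdempotentElem (e * f) := by
  have hef := hT.1 e he f hf
  obtain ⟨x, ⟨hxT, hx₁, hx₂⟩, -⟩ := hT.2 _ hef
  have hfxe : f * x * e = x := by
    refine (hT.2 _ hef).unique ⟨hT.1 _ (hT.1 f hf x hxT) e he, ?_, ?_⟩ ⟨hxT, hx₁, hx₂⟩ <;>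
      grind [IsIdempotentElem, mul_assoc]
  have hx : IsIdempotentElem x := by
    rw [IsIdempotentElem, ← hfxe]
    grind [IsIdempotentElem, mul_assoc]
  -- both `e * f` and `x` are inverses of `x`
  have : e * f = x :=
    (hT.2 x hxT).unique ⟨hef, hx₂, hx₁⟩ ⟨hxT, by rw [hx.eq, hx.eq], by rw [hx.eq, hx.eq]⟩
  exact this ▸ hx

theorem mul_comm_of_isIdempotentElem (hT : IsInverseSubsemigroup T) {e f : S} (he : e ∈ T)
    (he' : IsIdempotentElem e) (hf : f ∈ T) (hf' : IsIdempotentElem f) : e * f = f * e := by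
  have hef := hT.isIdempotentElem_mul he he' hf hf'
  have hfe := hT.isIdempotentElem_mul hf hf' he he'
  refine (hT.2 _ (hT.1 e he f hf)).unique ⟨hT.1 e he f hf, ?_, ?_⟩ ⟨hT.1 f hf e he, ?_, ?_⟩
  all_goals grind [IsIdempotentElem, mul_assoc]

end IsInverseSubsemigroup

theorem isRightCongruence_rees {I : Set S} (hI : ∀ a ∈ I, ∀ c, a * c ∈ I) :
    IsRightCongruence fun a b => a = b ∨ (a ∈ I ∧ b ∈ I) := by
  refine ⟨⟨fun _ => .inl rfl, ?_, ?_⟩, ?_⟩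
  · rintro a b (rfl | ⟨ha, hb⟩)
    exacts [.inl rfl, .inr ⟨hb, ha⟩]
  · rintro a b c (rfl | ⟨ha, hb⟩) (rfl | ⟨hb', hc⟩)
    exacts [.inl rfl, .inr ⟨hb', hc⟩, .inr ⟨ha, hb⟩, .inr ⟨ha, hc⟩]
  · rintro a b c (rfl | ⟨ha, hb⟩)
    exacts [.inl rfl, .inr ⟨hI a ha c, hI b hb c⟩]

theorem isRightCongruence_mul_left (s : S) : IsRightCongruence fun a b => s * a = s * b :=
  ⟨⟨fun _ => rfl, Eq.symm, Eq.trans⟩, fun a b c (hab : s * a = s * b) =>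
    show s * (a * c) = s * (b * c) by rw [← mul_assoc, hab, mul_assoc]⟩

namespace RightNoetherian

theorem exists_finite_generators (h : RightNoetherian S) {I : Set S}
    (hI : ∀ a ∈ I, ∀ c, a * c ∈ I) :
    ∃ Y : Set S, Y.Finite ∧ Y ⊆ I ∧
      ∀ J : Set S, (∀ a ∈ J, ∀ c, a * c ∈ J) → Y ⊆ J → I ⊆ J := by
  rcases I.subsingleton_or_nontrivial with hsub | hnt
  · exact ⟨I, hsub.finite, subset_rfl, fun _ _ hIJ => hIJ⟩
  obtain ⟨-, X, hXI, hXmin⟩ := h _ (isRightCongruence_rees hI)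
  refine ⟨{y ∈ I | ∃ p ∈ X, y = p.1 ∨ y = p.2}, ?_, fun _ hy => hy.1, fun J hJ hYJ a ha => ?_⟩
  · refine ((X.finite_toSet.image Prod.fst).union (X.finite_toSet.image Prod.snd)).subset ?_
    rintro y ⟨-, p, hp, rfl | rfl⟩
    exacts [.inl ⟨p, hp, rfl⟩, .inr ⟨p, hp, rfl⟩]
  have hXJ : ∀ p ∈ X, p.1 = p.2 ∨ (p.1 ∈ J ∧ p.2 ∈ J) := fun p hp =>
    (hXI p hp).imp_right fun ⟨h₁, h₂⟩ => ⟨hYJ ⟨h₁, p, hp, .inl rfl⟩, hYJ ⟨h₂, p, hp, .inr rfl⟩⟩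
  obtain ⟨b, hb, hba⟩ := hnt.exists_ne a
  rcases hXmin _ (isRightCongruence_rees hJ) hXJ a b (.inr ⟨ha, hb⟩) with rfl | ⟨haJ, -⟩
  exacts [absurd rfl hba, haJ]

theorem exists_finite_cover_of_isIdempotentElem (h : RightNoetherian S) {E : Set S}
    (hE : ∀ e ∈ E, IsIdempotentElem e) :
    ∃ F : Set S, F.Finite ∧ F ⊆ E ∧ ∀ e ∈ E, ∃ f ∈ F, f * e = e := by
  let ideal (F : Set S) : Set S := {x | ∃ f ∈ F, f * x = x}
  have hideal (F : Set S) : ∀ a ∈ ideal F, ∀ c, a * c ∈ ideal F :=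
    fun a ⟨f, hf, hfa⟩ c => ⟨f, hf, by rw [← mul_assoc, hfa]⟩
  obtain ⟨Y, hY, hYI, hYgen⟩ := h.exists_finite_generators (hideal E)
  choose! g hgE hgY using fun y (hy : y ∈ Y) => hYI hy
  refine ⟨g '' Y, hY.image g, Set.image_subset_iff.2 hgE, fun e he => ?_⟩
  exact hYgen _ (hideal _) (fun y hy => ⟨g y, Set.mem_image_of_mem g hy, hgY y hy⟩) ⟨e, he, hE e he⟩

theorem exists_infinite_below (h : RightNoetherian S) {E : Set S}
    (hE : ∀ e ∈ E, IsIdempotentElem e) (hinf : E.Infinite) :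
    ∃ f ∈ E, {e ∈ E | f * e = e ∧ e ≠ f}.Infinite := by
  obtain ⟨F, hF, hFE, hcover⟩ := h.exists_finite_cover_of_isIdempotentElem hE
  obtain ⟨f, hf, hfinf⟩ : ∃ f ∈ F, {e ∈ E | f * e = e}.Infinite := by
    by_contra! hfin
    refine hinf ((hF.biUnion hfin).subset fun e he => ?_)
    obtain ⟨f, hf, hfe⟩ := hcover e he
    exact Set.mem_biUnion hf ⟨he, hfe⟩
  refine ⟨f, hFE hf, (hfinf.sdiff (Set.finite_singleton f)).mono ?_⟩
  rintro e ⟨⟨he, hfe⟩, hef⟩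
  exact ⟨he, hfe, hef⟩

theorem wellFounded_idempotent_lt (h : RightNoetherian S) :
    WellFounded fun e f : S =>
      IsIdempotentElem e ∧ IsIdempotentElem f ∧ e * f = e ∧ f * e = e ∧ e ≠ f := by
  refine wellFounded_iff_isEmpty_descending_chain.2 ⟨fun ⟨c, hc⟩ => ?_⟩
  have hle : ∀ m n, m ≤ n → c n * c m = c n ∧ c m * c n = c n := by
    intro m n hmn
    induction n, hmn using Nat.le_induction with
    | base => exact ⟨(hc m).2.1.eq, (hc m).2.1.eq⟩
    | succ n _ ih =>
      obtain ⟨-, -, h₁, h₂, -⟩ := hc n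
      exact ⟨by rw [← h₁, mul_assoc, ih.1], by rw [← h₂, ← mul_assoc, ih.2]⟩
  have hmono : ∀ a b m n, m ≤ n → c m * a = c m * b → c n * a = c n * b := by
    intro a b m n hmn hab
    rw [← (hle m n hmn).1, mul_assoc, hab, ← mul_assoc]
  have hρ : IsRightCongruence fun a b => ∃ n, c n * a = c n * b := by
    refine ⟨⟨fun _ => ⟨0, rfl⟩, fun ⟨n, hn⟩ => ⟨n, hn.symm⟩, ?_⟩, ?_⟩
    · rintro a b d ⟨m, hm⟩ ⟨n, hn⟩
      exact ⟨max m n, (hmono _ _ _ _ (le_max_left m n) hm).trans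
        (hmono _ _ _ _ (le_max_right m n) hn)⟩
    · rintro a b d ⟨n, hn⟩
      exact ⟨n, by rw [← mul_assoc, hn, mul_assoc]⟩
  obtain ⟨-, X, hXρ, hXmin⟩ := h _ hρ
  choose! idx hidx using hXρ
  set N := X.sup idx
  have hN : c N * c N = c N * c (N + 1) :=
    hXmin _ (isRightCongruence_mul_left (c N))
      (fun p hp => hmono _ _ _ _ (X.le_sup hp) (hidx p hp)) _ _
      ⟨N + 1, by rw [(hle N (N + 1) N.le_succ).1, (hc N).1.eq]⟩
  rw [(hc N).2.1.eq, (hle N (N + 1) N.le_succ).2] at hN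
  exact (hc N).2.2.2.2 hN.symm

theorem finite_of_commuting_idempotents (h : RightNoetherian S) {E : Set S}
    (hE : ∀ e ∈ E, IsIdempotentElem e) (hcomm : ∀ e ∈ E, ∀ f ∈ E, e * f = f * e) :
    E.Finite := by
  by_contra hinf
  let below (f : S) : Set S := {e ∈ E | f * e = e ∧ e ≠ f}
  have hstep : ∀ f ∈ E, (below f).Infinite → ∃ g ∈ E, (below g).Infinite ∧ g ∈ below f := by
    intro f hf hfinf
    obtain ⟨g, hg, hginf⟩ := h.exists_infinite_below (fun e he => hE e he.1) hfinf
    exact ⟨g, hg.1, hginf.mono fun e he => ⟨he.1.1, he.2⟩, hg⟩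
  obtain ⟨f, ⟨hf, hfinf⟩, hmin⟩ := h.wellFounded_idempotent_lt.has_min
    {f | f ∈ E ∧ (below f).Infinite} (h.exists_infinite_below hE hinf)
  obtain ⟨g, hg, hginf, -, hfg, hgf⟩ := hstep f hf hfinf
  exact hmin g ⟨hg, hginf⟩ ⟨hE g hg, hE f hf, by rw [hcomm g hg f hf, hfg], hfg, hgf⟩

end RightNoetherian

end

theorem idempotents_finite_of_inverse_subsemigroup (S : Type*) [Semigroup S]
    (h : RightNoetherian S) (T : Set S)
    (hT : ∀ a ∈ T, ∀ b ∈ T, a * b ∈ T)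
    (hinv : ∀ a ∈ T, ∃! b : S, b ∈ T ∧ a * b * a = a ∧ b * a * b = b) :
    {e : S | e ∈ T ∧ e * e = e}.Finite := by
  have hT' : IsInverseSubsemigroup T := ⟨hT, hinv⟩
  exact h.finite_of_commuting_idempotents (fun e he => he.2)
    fun e he f hf => hT'.mul_comm_of_isIdempotentElem he.1 he.2 hf.1 hf.2
end

section
/- In a right noetherian monoid M, every right unit is a two-sided unit; equivalently, if xy = 1 for some x, y ∈ M then also yx = 1. -/
private lemma pow_mul_pow_eq_one' {M : Type*} [Monoid M] {x y : M} (hxy : x * y = 1) :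
    ∀ n : ℕ, x ^ n * y ^ n = 1
  | 0 => by simp
  | n + 1 => by
    have := pow_mul_pow_eq_one' hxy n
    calc x ^ (n + 1) * y ^ (n + 1) = x * (x ^ n * y ^ n) * y := by
          rw [pow_succ' x, pow_succ y]; simp [mul_assoc]
      _ = 1 := by rw [this, mul_one, hxy]

private lemma lift_pow_eq {M : Type*} [Monoid M] {x a b : M} {n N : ℕ} (hnN : n ≤ N)
    (hab : x ^ n * a = x ^ n * b) : x ^ N * a = x ^ N * b := by
  have : x ^ N = x ^ (N - n) * x ^ n := by rw [← pow_add]; congr 1; omega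
  rw [this, mul_assoc, mul_assoc, hab]

theorem rightUnit_is_unit (M : Type*) [Monoid M] (h : RightNoetherian M) :
    ∀ x y : M, x * y = 1 → y * x = 1 := by
  intro x y hxy
  -- the right congruence ρ a b ↔ ∃ n, x^n a = x^n b
  set ρ : M → M → Prop := fun a b => ∃ n : ℕ, x ^ n * a = x ^ n * b with hρ
  have hcong : IsRightCongruence ρ := by
    constructor
    · constructor
      · intro a; exact ⟨0, rfl⟩
      · rintro a b ⟨n, hn⟩; exact ⟨n, hn.symm⟩
      · rintro a b c ⟨m, hm⟩ ⟨n, hn⟩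
        exact ⟨max m n, (lift_pow_eq (le_max_left m n) hm).trans
          (lift_pow_eq (le_max_right m n) hn)⟩
    · rintro a b c ⟨n, hn⟩
      exact ⟨n, by rw [← mul_assoc, ← mul_assoc, hn]⟩
  obtain ⟨-, X, hX, hleast⟩ := h ρ hcong
  choose f hf using hX
  set N : ℕ := X.attach.sup (fun p => f p.1 p.2) with hN
  -- the right congruence r' a b ↔ x^N a = x^N b contains X
  set r' : M → M → Prop := fun a b => x ^ N * a = x ^ N * b with hr'
  have hcong' : IsRightCongruence r' := by
    refine ⟨⟨fun a => rfl, fun hab => hab.symm, fun hab hbc => hab.trans hbc⟩, ?_⟩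
    intro a b c hab
    simp only [hr'] at *
    rw [← mul_assoc, ← mul_assoc, hab]
  have hXr' : ∀ p ∈ X, r' p.1 p.2 := by
    intro p hp
    exact lift_pow_eq (Finset.le_sup (f := fun p => f p.1 p.2) (X.mem_attach ⟨p, hp⟩))
      (hf p hp)
  have hsub : ∀ a b : M, ρ a b → r' a b := hleast r' hcong' hXr'
  -- apply to a = y^(N+1) x^(N+1), b = 1
  have key : r' (y ^ (N + 1) * x ^ (N + 1)) 1 := by
    apply hsub
    exact ⟨N + 1, by rw [← mul_assoc, pow_mul_pow_eq_one' hxy (N + 1), one_mul, mul_one]⟩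
  -- key : x^N * (y^(N+1) * x^(N+1)) = x^N * 1
  have hyx : y * x ^ (N + 1) = x ^ N := by
    have h1 : x ^ N * y ^ (N + 1) = y := by
      rw [pow_succ y, ← mul_assoc, pow_mul_pow_eq_one' hxy N, one_mul]
    calc y * x ^ (N + 1) = (x ^ N * y ^ (N + 1)) * x ^ (N + 1) := by rw [h1]
      _ = x ^ N * (y ^ (N + 1) * x ^ (N + 1)) := by rw [mul_assoc]
      _ = x ^ N * 1 := key
      _ = x ^ N := mul_one _
  have h2 : x ^ (N + 1) * y ^ N = x := by
    rw [pow_succ' x, mul_assoc, pow_mul_pow_eq_one' hxy N, mul_one]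
  calc y * x = y * x ^ (N + 1) * y ^ N := by rw [mul_assoc, h2]
    _ = x ^ N * y ^ N := by rw [hyx]
    _ = 1 := pow_mul_pow_eq_one' hxy N
end

section
/- If S is an infinite semigroup and T = {a,b} is the two-element right zero semigroup (st = t for all s,t), then the direct product S × T is not right noetherian: the right congruence generated by {((s,a),(s,b)) : s ∈ S} is not finitely generated. -/
/-- The right congruence generated by a set of pairs: the intersection of all
right congruences containing it. -/
def genRightCong {S : Type*} [Semigroup S] (G : Set (S × S)) (a b : S) : Prop :=
  ∀ r : S → S → Prop, IsRightCongruence r → (∀ p ∈ G, r p.1 p.2) → r a b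

lemma genRightCong_isRightCongruence {U : Type*} [Semigroup U] (G : Set (U × U)) :
    IsRightCongruence (genRightCong G) := by
  constructor
  · constructor
    · intro x r hr _; exact hr.1.refl x
    · intro x y h r hr hGr; exact hr.1.symm (h r hr hGr)
    · intro x y z h1 h2 r hr hGr; exact hr.1.trans (h1 r hr hGr) (h2 r hr hGr)
  · intro x y c h r hr hGr; exact hr.2 x y c (h r hr hGr)

theorem prod_rightZero_not_rightNoetherian (S T : Type*) [Semigroup S] [Semigroup T]
    [Infinite S] (hT : ∀ s t : T, s * t = t) (a b : T) (hab : a ≠ b)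
    (htwo : ∀ t : T, t = a ∨ t = b) :
    ¬ RightNoetherian (S × T) ∧
      ¬ IsFGRightCongruence
          (genRightCong {p : (S × T) × (S × T) | ∃ s : S, p = ((s, a), (s, b))}) := by
  set G : Set ((S × T) × (S × T)) := {p | ∃ s : S, p = ((s, a), (s, b))} with hG
  have hcong : IsRightCongruence (genRightCong G) := genRightCong_isRightCongruence G
  have hgen : ∀ s : S, genRightCong G (s, a) (s, b) := by
    intro s r hr hGr
    exact hGr ((s, a), (s, b)) ⟨s, rfl⟩
  -- the "first components equal" right congruence
  have hr1 : IsRightCongruence (fun x y : S × T => x.1 = y.1) := by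
    refine ⟨⟨fun _ => rfl, fun h => h.symm, fun h h' => h.trans h'⟩, ?_⟩
    intro x y c h
    show x.1 * c.1 = y.1 * c.1
    rw [h]
  have hfstmem : ∀ x y : S × T, genRightCong G x y → x.1 = y.1 := by
    intro x y h
    exact h _ hr1 (by rintro p ⟨s, rfl⟩; rfl)
  have hnfg : ¬ IsFGRightCongruence (genRightCong G) := by
    rintro ⟨-, X, hX, hleast⟩
    classical
    obtain ⟨s, hs⟩ := Infinite.exists_notMem_finset (X.image (fun p => p.1.1))
    -- separating right congruence avoiding the fresh s
    set r' : (S × T) → (S × T) → Prop :=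
      fun x y => x = y ∨ (x.1 = y.1 ∧ x.1 ≠ s) with hr'def
    have hr'cong : IsRightCongruence r' := by
      constructor
      · constructor
        · intro x; exact Or.inl rfl
        · rintro x y (rfl | ⟨h1, h2⟩)
          · exact Or.inl rfl
          · exact Or.inr ⟨h1.symm, h1 ▸ h2⟩
        · rintro x y z (rfl | ⟨h1, h2⟩) h'
          · exact h'
          · rcases h' with rfl | ⟨h3, h4⟩
            · exact Or.inr ⟨h1, h2⟩
            · exact Or.inr ⟨h1.trans h3, h2⟩
      · rintro x y c (rfl | ⟨h1, h2⟩)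
        · exact Or.inl rfl
        · refine Or.inl (Prod.ext ?_ ?_)
          · show x.1 * c.1 = y.1 * c.1; rw [h1]
          · show x.2 * c.2 = y.2 * c.2; rw [hT, hT]
    have hr'X : ∀ p ∈ X, r' p.1 p.2 := by
      intro p hp
      refine Or.inr ⟨hfstmem _ _ (hX p hp), fun h => hs ?_⟩
      rw [← h]; exact Finset.mem_image_of_mem _ hp
    have := hleast r' hr'cong hr'X (s, a) (s, b) (hgen s)
    rcases this with h | ⟨-, h⟩
    · exact hab (by simpa using congrArg Prod.snd h)
    · exact h rfl
  exact ⟨fun hN => hnfg (hN _ hcong), hnfg⟩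
end

section
/- Let M be a finite monoid and S any semigroup. Then the direct product M × S is right noetherian if and only if S is right noetherian. -/
/-- An "act congruence" on the `S`-act `ι × S` (S acting on the right on the
second component). -/
def ActCong {ι S : Type*} [Semigroup S] (θ : ι × S → ι × S → Prop) : Prop :=
  Equivalence θ ∧ ∀ x y : ι × S, ∀ c : S, θ x y → θ (x.1, x.2 * c) (y.1, y.2 * c)

/-- In a right noetherian semigroup, every right-multiplication-closed subset is
finitely generated (as a "subact"). -/
lemma subact_fg {S : Type*} [Semigroup S] (hS : RightNoetherian S) (K : Set S)
    (hK : ∀ a ∈ K, ∀ c : S, a * c ∈ K) :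
    ∃ G : Finset S, (∀ g ∈ G, g ∈ K) ∧
      ∀ a ∈ K, a ∈ G ∨ ∃ g ∈ G, ∃ c : S, a = g * c := by
  classical
  by_cases hsing : ∀ a ∈ K, ∀ b ∈ K, a = b
  · rcases Set.eq_empty_or_nonempty K with h | ⟨a0, ha0⟩
    · exact ⟨∅, by simp, by simp [h]⟩
    · refine ⟨{a0}, by simpa using ha0, fun a ha => Or.inl ?_⟩
      simp [hsing a ha a0 ha0]
  · push_neg at hsing
    obtain ⟨a0, ha0, b0, hb0, hab⟩ := hsing
    have hcong : IsRightCongruence (fun a b : S => a = b ∨ (a ∈ K ∧ b ∈ K)) := by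
      constructor
      · constructor
        · exact fun a => Or.inl rfl
        · rintro x y (rfl | ⟨h1, h2⟩)
          · exact Or.inl rfl
          · exact Or.inr ⟨h2, h1⟩
        · intro x y z h1 h2
          rcases h1 with rfl | ⟨hx, hy⟩
          · exact h2
          · rcases h2 with rfl | ⟨hy', hz⟩
            · exact Or.inr ⟨hx, hy⟩
            · exact Or.inr ⟨hx, hz⟩
      · intro a b c h
        rcases h with rfl | ⟨h1, h2⟩
        · exact Or.inl rfl
        · exact Or.inr ⟨hK a h1 c, hK b h2 c⟩
    obtain ⟨-, X, hX1, hX2⟩ := hS _ hcong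
    set G : Finset S :=
      (X.image Prod.fst ∪ X.image Prod.snd).filter (fun x => x ∈ K) with hGdef
    have hGK : ∀ g ∈ G, g ∈ K := fun g hg => (Finset.mem_filter.mp hg).2
    set K0 : Set S := {a | a ∈ G ∨ ∃ g ∈ G, ∃ c : S, a = g * c} with hK0def
    have hK0mul : ∀ a ∈ K0, ∀ c : S, a * c ∈ K0 := by
      rintro a (ha | ⟨g, hg, c', rfl⟩) c
      · exact Or.inr ⟨a, ha, c, rfl⟩
      · exact Or.inr ⟨g, hg, c' * c, mul_assoc g c' c⟩
    have hr'' : IsRightCongruence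
        (fun x y : S => x = y ∨ (x ∈ K ∧ y ∈ K ∧ x ∈ K0 ∧ y ∈ K0)) := by
      constructor
      · constructor
        · exact fun a => Or.inl rfl
        · rintro x y (rfl | ⟨h1, h2, h3, h4⟩)
          · exact Or.inl rfl
          · exact Or.inr ⟨h2, h1, h4, h3⟩
        · intro x y z h1 h2
          rcases h1 with rfl | ⟨hx, hy, hx0, hy0⟩
          · exact h2
          · rcases h2 with rfl | ⟨_, hz, _, hz0⟩
            · exact Or.inr ⟨hx, hy, hx0, hy0⟩
            · exact Or.inr ⟨hx, hz, hx0, hz0⟩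
      · intro a b c h
        rcases h with rfl | ⟨h1, h2, h3, h4⟩
        · exact Or.inl rfl
        · exact Or.inr ⟨hK a h1 c, hK b h2 c, hK0mul a h3 c, hK0mul b h4 c⟩
    have hXr'' : ∀ p ∈ X,
        p.1 = p.2 ∨ (p.1 ∈ K ∧ p.2 ∈ K ∧ p.1 ∈ K0 ∧ p.2 ∈ K0) := by
      intro p hp
      rcases hX1 p hp with h | ⟨h1, h2⟩
      · exact Or.inl h
      · refine Or.inr ⟨h1, h2, Or.inl ?_, Or.inl ?_⟩
        · exact Finset.mem_filter.mpr
            ⟨Finset.mem_union_left _ (Finset.mem_image.mpr ⟨p, hp, rfl⟩), h1⟩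
        · exact Finset.mem_filter.mpr
            ⟨Finset.mem_union_right _ (Finset.mem_image.mpr ⟨p, hp, rfl⟩), h2⟩
    have main := hX2 _ hr'' hXr''
    refine ⟨G, hGK, ?_⟩
    intro a ha
    obtain ⟨b, hb, hba⟩ : ∃ b ∈ K, b ≠ a := by
      by_cases h : a = a0
      · refine ⟨b0, hb0, fun e => hab ?_⟩
        rw [← h, ← e]
      · exact ⟨a0, ha0, fun e => h e.symm⟩
    have hmm := main a b (Or.inr ⟨ha, hb⟩)
    rcases hmm with rfl | ⟨-, -, h3, -⟩
    · exact absurd rfl hba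
    · exact h3

/-- Key lemma: any act congruence on `ι × S` is, over any finite set of indices,
generated by finitely many pairs, provided `S` is right noetherian. -/
lemma key {ι S : Type*} [Semigroup S] (hS : RightNoetherian S)
    (θ : ι × S → ι × S → Prop) (hθ : ActCong θ) (J : Finset ι) :
    ∃ X : Finset ((ι × S) × (ι × S)), (∀ p ∈ X, θ p.1 p.2) ∧
      ∀ θ' : ι × S → ι × S → Prop, ActCong θ' → (∀ p ∈ X, θ' p.1 p.2) →
        ∀ x y : ι × S, x.1 ∈ J → y.1 ∈ J → θ x y → θ' x y := by
  classical
  induction J using Finset.induction_on with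
  | empty => exact ⟨∅, by simp, fun θ' _ _ x y hx => absurd hx (by simp)⟩
  | @insert j₀ J' hj IH =>
    obtain ⟨X', hX'1, hX'2⟩ := IH
    have hσ : IsRightCongruence (fun a b : S => θ (j₀, a) (j₀, b)) :=
      ⟨⟨fun a => hθ.1.refl _, fun h => hθ.1.symm h, fun h1 h2 => hθ.1.trans h1 h2⟩,
       fun a b c h => hθ.2 (j₀, a) (j₀, b) c h⟩
    obtain ⟨-, Y, hY1, hY2⟩ := hS _ hσ
    set K : Set S := {a | ∃ z : ι × S, z.1 ∈ J' ∧ θ (j₀, a) z} with hKdef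
    have hK : ∀ a ∈ K, ∀ c : S, a * c ∈ K := by
      rintro a ⟨z, hz1, hz2⟩ c
      exact ⟨(z.1, z.2 * c), hz1, hθ.2 _ _ c hz2⟩
    obtain ⟨G, hGK, hGgen⟩ := subact_fg hS K hK
    have hw : ∀ g ∈ G, ∃ z : ι × S, z.1 ∈ J' ∧ θ (j₀, g) z := fun g hg => hGK g hg
    set CP : Finset ((ι × S) × (ι × S)) :=
      G.attach.image (fun g => ((j₀, g.1), Classical.choose (hw g.1 g.2))) with hCPdef
    refine ⟨X' ∪ Y.image (fun y => ((j₀, y.1), (j₀, y.2))) ∪ CP, ?_, ?_⟩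
    · intro p hp
      rcases Finset.mem_union.mp hp with hp | hp
      · rcases Finset.mem_union.mp hp with hp | hp
        · exact hX'1 p hp
        · obtain ⟨y, hy, rfl⟩ := Finset.mem_image.mp hp
          exact hY1 y hy
      · obtain ⟨g, -, rfl⟩ := Finset.mem_image.mp hp
        exact (Classical.choose_spec (hw g.1 g.2)).2
    · intro θ' hθ' hXθ' x y hx hy hxy
      have hX'θ' : ∀ p ∈ X', θ' p.1 p.2 := fun p hp =>
        hXθ' p (Finset.mem_union_left _ (Finset.mem_union_left _ hp))
      have F1 : ∀ x y : ι × S, x.1 ∈ J' → y.1 ∈ J' → θ x y → θ' x y :=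
        hX'2 θ' hθ' hX'θ'
      have F2 : ∀ a b : S, θ (j₀, a) (j₀, b) → θ' (j₀, a) (j₀, b) := by
        intro a b h
        refine hY2 (fun a b => θ' (j₀, a) (j₀, b))
          ⟨⟨fun a => hθ'.1.refl _, fun h => hθ'.1.symm h,
            fun h1 h2 => hθ'.1.trans h1 h2⟩,
           fun a b c h => hθ'.2 (j₀, a) (j₀, b) c h⟩ ?_ a b h
        intro p hp
        exact hXθ' _ (Finset.mem_union_left _ (Finset.mem_union_right _
          (Finset.mem_image.mpr ⟨p, hp, rfl⟩)))
      have F3 : ∀ (a : S) (z : ι × S), z.1 ∈ J' → θ (j₀, a) z → θ' (j₀, a) z := by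
        intro a z hz1 hz2
        have haK : a ∈ K := ⟨z, hz1, hz2⟩
        rcases hGgen a haK with hmem | ⟨g, hg, c, rfl⟩
        · have hzg := Classical.choose_spec (hw a hmem)
          have h1 : θ' (j₀, a) (Classical.choose (hw a hmem)) :=
            hXθ' _ (Finset.mem_union_right _
              (Finset.mem_image.mpr ⟨⟨a, hmem⟩, Finset.mem_attach _ _, rfl⟩))
          have h2 : θ (Classical.choose (hw a hmem)) z :=
            hθ.1.trans (hθ.1.symm hzg.2) hz2
          exact hθ'.1.trans h1 (F1 _ _ hzg.1 hz1 h2)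
        · have hzg := Classical.choose_spec (hw g hg)
          have h1 : θ' (j₀, g) (Classical.choose (hw g hg)) :=
            hXθ' _ (Finset.mem_union_right _
              (Finset.mem_image.mpr ⟨⟨g, hg⟩, Finset.mem_attach _ _, rfl⟩))
          have h1c : θ' (j₀, g * c)
              ((Classical.choose (hw g hg)).1, (Classical.choose (hw g hg)).2 * c) :=
            hθ'.2 (j₀, g) _ c h1
          have h2 : θ (j₀, g * c)
              ((Classical.choose (hw g hg)).1, (Classical.choose (hw g hg)).2 * c) :=
            hθ.2 (j₀, g) _ c hzg.2
          have h3 : θ ((Classical.choose (hw g hg)).1,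
              (Classical.choose (hw g hg)).2 * c) z :=
            hθ.1.trans (hθ.1.symm h2) hz2
          exact hθ'.1.trans h1c (F1 _ _ hzg.1 hz1 h3)
      obtain ⟨i, a⟩ := x
      obtain ⟨j, b⟩ := y
      simp only [Finset.mem_insert] at hx hy
      rcases hx with rfl | hx <;> rcases hy with rfl | hy
      · exact F2 a b hxy
      · exact F3 a (j, b) hy hxy
      · exact hθ'.1.symm (F3 b (i, a) hx (hθ.1.symm hxy))
      · exact F1 _ _ hx hy hxy

theorem prod_finite_monoid_rightNoetherian_iff (M S : Type*) [Monoid M] [Finite M]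
    [Semigroup S] :
    RightNoetherian (M × S) ↔ RightNoetherian S := by
  classical
  constructor
  · intro hMS r hr
    have hr2 : IsRightCongruence (fun x y : M × S => r x.2 y.2) :=
      ⟨⟨fun x => hr.1.refl _, fun h => hr.1.symm h, fun h1 h2 => hr.1.trans h1 h2⟩,
       fun x y c h => hr.2 _ _ c.2 h⟩
    obtain ⟨-, X2, hX21, hX22⟩ := hMS _ hr2
    refine ⟨hr, X2.image (fun p => (p.1.2, p.2.2)), ?_, ?_⟩
    · intro p hp
      obtain ⟨q, hq, rfl⟩ := Finset.mem_image.mp hp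
      exact hX21 q hq
    · intro r' hr' hr'X a b hab
      have h : ∀ x y : M × S, r x.2 y.2 → r' x.2 y.2 := by
        refine hX22 (fun x y => r' x.2 y.2)
          ⟨⟨fun x => hr'.1.refl _, fun h => hr'.1.symm h,
            fun h1 h2 => hr'.1.trans h1 h2⟩,
           fun x y c h => hr'.2 _ _ c.2 h⟩ ?_
        intro p hp
        exact hr'X _ (Finset.mem_image.mpr ⟨p, hp, rfl⟩)
      exact h (1, a) (1, b) hab
  · intro hS ρ hρ
    letI : Fintype M := Fintype.ofFinite M
    have hact : ActCong ρ := by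
      refine ⟨hρ.1, fun x y c h => ?_⟩
      have := hρ.2 x y (1, c) h
      simpa [Prod.mul_def] using this
    obtain ⟨X, hX1, hX2⟩ := key hS ρ hact Finset.univ
    refine ⟨hρ, X, hX1, ?_⟩
    intro r' hr' hr'X x y hxy
    refine hX2 r' ⟨hr'.1, fun u v c h => ?_⟩ hr'X x y (Finset.mem_univ _)
      (Finset.mem_univ _) hxy
    have := hr'.2 u v (1, c) h
    simpa [Prod.mul_def] using this
end

section
/- The semigroup free product of two trivial semigroups, i.e., the semigroup presented by ⟨e, f | e² = e, f² = f⟩, is right noetherian. -/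
/-- The defining relations of the presentation `⟨e, f | e² = e, f² = f⟩`,
with `e = of true` and `f = of false` in the free semigroup on two generators. -/
def idempotentRel : FreeSemigroup Bool → FreeSemigroup Bool → Prop := fun x y =>
  (x = FreeSemigroup.of true * FreeSemigroup.of true ∧ y = FreeSemigroup.of true) ∨
  (x = FreeSemigroup.of false * FreeSemigroup.of false ∧ y = FreeSemigroup.of false)

/-!
Elements of `⟨e, f | e² = e, f² = f⟩` are alternating words, so the semigroup is a homomorphic
image of the model `AltWord` (first letter and length), and being right noetherian passes to
homomorphic images.

In `AltWord`, right multiplication by a letter either fixes a word (if it is its last letter) or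
lengthens it by one. So in a right congruence `r`, one related pair `(u, u')` of distinct words
with the same first letter makes `r` periodic, with period `|u'| - |u|`, on all longer words with
that first letter. If no such pair exists for the first letter of `w`, a related pair `(v, w)`
with `v` starting with the other letter is a translate of the pair `(v₀, w₀)` of this kind with
`v₀` shortest: the last letters of `v₀` and `w₀` agree, as otherwise `w₀` would be related to its
one-letter extension. Hence `r` is generated by its pairs of words shorter than a bound computed
from finitely many minimal related pairs.
-/

open Function

section RightCongruence

variable {S T : Type*} [Semigroup S] [Semigroup T]

theorem IsRightCongruence.comap {r : T → T → Prop} (hr : IsRightCongruence r) (f : S →ₙ* T) :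
    IsRightCongruence fun x y => r (f x) (f y) :=
  ⟨hr.1.comap f, fun a b c h => by
    simpa only [map_mul] using hr.2 _ _ (f c) h⟩

theorem isFGRightCongruence_of_finite {r : S → S → Prop} (hr : IsRightCongruence r) {F : Set S}
    (hF : F.Finite)
    (h : ∀ r', IsRightCongruence r' → (∀ x ∈ F, ∀ y ∈ F, r x y → r' x y) → ∀ x y, r x y → r' x y) :
    IsFGRightCongruence r := by
  have hfin : {p : S × S | p.1 ∈ F ∧ p.2 ∈ F ∧ r p.1 p.2}.Finite :=
    (hF.prod hF).subset fun p hp => ⟨hp.1, hp.2.1⟩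
  refine ⟨hr, hfin.toFinset, fun p hp => (hfin.mem_toFinset.1 hp).2.2, fun r' hr' hX => ?_⟩
  exact h r' hr' fun x hx y hy hxy => hX (x, y) (hfin.mem_toFinset.2 ⟨hx, hy, hxy⟩)

theorem RightNoetherian.of_surjective (hS : RightNoetherian S) (f : S →ₙ* T)
    (hf : Surjective f) : RightNoetherian T := by
  classical
  intro r hr
  obtain ⟨-, X, hXr, hXmin⟩ := hS _ (hr.comap f)
  refine ⟨hr, X.image (Prod.map f f), ?_, fun r' hr' hX a b hab => ?_⟩
  · simpa only [Finset.forall_mem_image, Prod.map_fst, Prod.map_snd] using hXr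
  · obtain ⟨a, rfl⟩ := hf a
    obtain ⟨b, rfl⟩ := hf b
    exact hXmin _ (hr'.comap f) (fun p hp => hX _ (Finset.mem_image_of_mem _ hp)) a b hab

end RightCongruence

theorem Nat.exists_bound_witness_le_fst (P : ℕ → ℕ → Prop) :
    ∃ K, ∀ m n, P m n → ∃ m' n', P m' n' ∧ m' ≤ m ∧ m' ≤ K ∧ n' ≤ K := by
  classical
  by_cases h : ∃ m n, P m n
  · obtain ⟨n₀, hn₀⟩ := Nat.find_spec h
    exact ⟨Nat.find h + n₀, fun m n hmn =>
      ⟨_, n₀, hn₀, Nat.find_min' h ⟨n, hmn⟩, by omega, by omega⟩⟩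
  · exact ⟨0, fun m n hmn => absurd ⟨m, n, hmn⟩ h⟩

/-- The alternating word in `e = true`, `f = false` of length `tailLen + 1` starting with `head`. -/
@[ext]
structure AltWord where
  head : Bool
  tailLen : ℕ

namespace AltWord

def last (x : AltWord) : Bool := x.head ^^ x.tailLen.bodd

/-- Concatenation, merging the two middle letters when they agree (`e² = e`, `f² = f`). -/
instance : Mul AltWord :=
  ⟨fun x y => ⟨x.head, x.tailLen + y.tailLen + if x.last = y.head then 0 else 1⟩⟩

@[simp]
theorem head_mul (x y : AltWord) : (x * y).head = x.head := rfl

@[simp]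
theorem tailLen_mul (x y : AltWord) :
    (x * y).tailLen = x.tailLen + y.tailLen + if x.last = y.head then 0 else 1 := rfl

@[simp]
theorem last_mk_add (b : Bool) (m k : ℕ) : last ⟨b, m + k⟩ = (last ⟨b, m⟩ ^^ k.bodd) := by
  simp [last, Nat.bodd_add]

theorem last_mul (x y : AltWord) : (x * y).last = y.last := by
  obtain ⟨b, m⟩ := x
  obtain ⟨c, n⟩ := y
  simp only [last, head_mul, tailLen_mul, Nat.bodd_add]
  rcases Bool.eq_false_or_eq_true m.bodd with hm | hm <;>
    rcases Bool.eq_false_or_eq_true n.bodd with hn | hn <;>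
      cases b <;> cases c <;> simp [hm, hn]

instance : Semigroup AltWord where
  mul_assoc x y z := by
    ext
    · rfl
    · simp only [tailLen_mul, last_mul, head_mul]
      omega

def of (b : Bool) : AltWord := ⟨b, 0⟩

theorem mul_of_last (x : AltWord) : x * of x.last = x := by
  ext <;> simp [of]

theorem mul_of_of_ne_last {x : AltWord} {c : Bool} (h : c ≠ x.last) :
    x * of c = ⟨x.head, x.tailLen + 1⟩ := by
  ext <;> simp [of, h.symm]

theorem of_mul_mk_not (b : Bool) (n : ℕ) : of b * ⟨!b, n⟩ = ⟨b, n + 1⟩ := by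
  ext <;> simp [of, last]

theorem of_mul_mk_self (b : Bool) (n : ℕ) : of b * ⟨b, n⟩ = ⟨b, n⟩ := by
  ext <;> simp [of, last]

section RightCongruence

variable {s : AltWord → AltWord → Prop} (hs : IsRightCongruence s) {b c : Bool} {m n : ℕ}
include hs

theorem rel_succ_succ (h : s ⟨b, m⟩ ⟨c, n⟩) (hl : last ⟨b, m⟩ = last ⟨c, n⟩) :
    s ⟨b, m + 1⟩ ⟨c, n + 1⟩ := by
  have h' := hs.2 _ _ (of !(last ⟨b, m⟩)) h
  rwa [mul_of_of_ne_last (by simp), hl, mul_of_of_ne_last (by simp)] at h'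

theorem rel_add_add (h : s ⟨b, m⟩ ⟨c, n⟩) (hl : last ⟨b, m⟩ = last ⟨c, n⟩) (k : ℕ) :
    s ⟨b, m + k⟩ ⟨c, n + k⟩ := by
  induction k with
  | zero => exact h
  | succ k ih => exact rel_succ_succ hs ih (by simp [hl])

theorem rel_succ_of_last_ne (h : s ⟨b, m⟩ ⟨c, n⟩) (hl : last ⟨b, m⟩ ≠ last ⟨c, n⟩) :
    s ⟨c, n⟩ ⟨c, n + 1⟩ := by
  have h' := hs.2 _ _ (of (last ⟨b, m⟩)) h
  rw [mul_of_last, mul_of_of_ne_last hl] at h'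
  exact hs.1.trans (hs.1.symm h) h'

theorem rel_add_of_rel_succ (h : s ⟨b, m⟩ ⟨b, m + 1⟩) (hn : m ≤ n) (k : ℕ) :
    s ⟨b, n⟩ ⟨b, n + k⟩ := by
  have hstep : ∀ n, m ≤ n → s ⟨b, n⟩ ⟨b, n + 1⟩ := fun n hn => by
    induction n, hn using Nat.le_induction with
    | base => exact h
    | succ n _ ih => exact rel_succ_of_last_ne hs ih (by simp)
  induction k with
  | zero => exact hs.1.refl _
  | succ k ih => exact hs.1.trans ih (hstep _ (by omega))

theorem rel_add_of_rel {p : ℕ} (h : s ⟨b, m⟩ ⟨b, m + p⟩) (hn : m + p ≤ n) :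
    s ⟨b, n⟩ ⟨b, n + p⟩ := by
  by_cases hl : last ⟨b, m⟩ = last ⟨b, m + p⟩
  · obtain ⟨k, rfl⟩ := Nat.exists_eq_add_of_le (show m ≤ n by omega)
    simpa only [Nat.add_right_comm m p k] using rel_add_add hs h hl k
  · exact rel_add_of_rel_succ hs (rel_succ_of_last_ne hs h hl) hn p

theorem exists_rel_add_of_rel_of_ne (h : s ⟨b, m⟩ ⟨b, n⟩) (hmn : m ≠ n) :
    ∃ m₀ p, 0 < p ∧ s ⟨b, m₀⟩ ⟨b, m₀ + p⟩ := by
  rcases Nat.lt_or_gt_of_ne hmn with hlt | hlt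
  · exact ⟨m, n - m, by omega, by rwa [Nat.add_sub_cancel' hlt.le]⟩
  · exact ⟨n, m - n, by omega, by rw [Nat.add_sub_cancel' hlt.le]; exact hs.1.symm h⟩

end RightCongruence

theorem rel_of_rel_of_le_witness {r r' : AltWord → AltWord → Prop} (hr : IsRightCongruence r)
    (hr' : IsRightCongruence r') {b c : Bool} {m n m₁ n₁ : ℕ}
    (hinj : ∀ n₁ n₂, r ⟨b, n₁⟩ ⟨b, n₂⟩ → n₁ = n₂) (h : r ⟨c, m⟩ ⟨b, n⟩)
    (hw : r ⟨c, m₁⟩ ⟨b, n₁⟩) (hw' : r' ⟨c, m₁⟩ ⟨b, n₁⟩) (hm : m₁ ≤ m) : r' ⟨c, m⟩ ⟨b, n⟩ := by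
  have hl : last ⟨c, m₁⟩ = last ⟨b, n₁⟩ := by
    by_contra hl
    have := hinj _ _ (rel_succ_of_last_ne hr hw hl)
    omega
  obtain ⟨k, rfl⟩ := Nat.exists_eq_add_of_le hm
  obtain rfl : n = n₁ + k := hinj _ _ (hr.1.trans (hr.1.symm h) (rel_add_add hr hw hl k))
  exact rel_add_add hr' hw' hl k

section Reduction

variable {r r' : AltWord → AltWord → Prop} (hr : IsRightCongruence r)
  (hr' : IsRightCongruence r') {M : ℕ}
  (hgap : ∀ b n₁ n₂, n₁ ≠ n₂ → r ⟨b, n₁⟩ ⟨b, n₂⟩ →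
    ∃ m₀ p, 0 < p ∧ m₀ + 2 * p ≤ M ∧ r ⟨b, m₀⟩ ⟨b, m₀ + p⟩)
  (hcross : ∀ b m n, r ⟨!b, m⟩ ⟨b, n⟩ →
    ∃ m₁ n₁, m₁ ≤ m ∧ m₁ ≤ M ∧ n₁ ≤ M ∧ r ⟨!b, m₁⟩ ⟨b, n₁⟩)
  (hbase : ∀ x y, r x y → x.tailLen ≤ M → y.tailLen ≤ M → r' x y)
include hr hr' hgap hcross hbase

theorem rel_of_rel_of_lt_tailLen {x y : AltWord}
    (ih : ∀ x' y', x'.tailLen + y'.tailLen < x.tailLen + y.tailLen → r x' y' → r' x' y')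
    (hy : M < y.tailLen) (h : r x y) : r' x y := by
  obtain ⟨b, n⟩ := y
  by_cases hinj : ∀ n₁ n₂, r ⟨b, n₁⟩ ⟨b, n₂⟩ → n₁ = n₂
  · obtain ⟨c, m⟩ := x
    obtain rfl | rfl : c = b ∨ c = !b := by cases b <;> cases c <;> simp
    · rw [hinj m n h]
      exact hr'.1.refl _
    · obtain ⟨m₁, n₁, hm, hm₁, hn₁, hw⟩ := hcross b m n h
      exact rel_of_rel_of_le_witness hr hr' hinj h hw (hbase _ _ hw hm₁ hn₁) hm
  · push Not at hinj
    obtain ⟨n₁, n₂, h₁₂, hne⟩ := hinj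
    obtain ⟨m₀, p, hp, hM, hw⟩ := hgap b n₁ n₂ hne h₁₂
    simp only at hy
    obtain ⟨k, rfl⟩ := Nat.exists_eq_add_of_le' (show p ≤ n by omega)
    have hk : m₀ + p ≤ k := by omega
    have hstep : r ⟨b, k⟩ ⟨b, k + p⟩ := rel_add_of_rel hr hw hk
    have hstep' : r' ⟨b, k⟩ ⟨b, k + p⟩ :=
      rel_add_of_rel hr' (hbase _ _ hw (by simp only; omega) (by simp only; omega)) hk
    have hx : r x ⟨b, k⟩ := hr.1.trans h (hr.1.symm hstep)
    exact hr'.1.trans (ih _ _ (by simp only; omega) hx) hstep'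

theorem rel_of_rel {x y : AltWord} (h : r x y) : r' x y := by
  induction hN : x.tailLen + y.tailLen using Nat.strong_induction_on generalizing x y with
  | _ N ih =>
  have ih' : ∀ x' y', x'.tailLen + y'.tailLen < x.tailLen + y.tailLen → r x' y' → r' x' y' :=
    fun x' y' hlt h' => ih _ (hN ▸ hlt) h' rfl
  by_cases hy : M < y.tailLen
  · exact rel_of_rel_of_lt_tailLen hr hr' hgap hcross hbase ih' hy h
  by_cases hx : M < x.tailLen
  · refine hr'.1.symm (rel_of_rel_of_lt_tailLen hr hr' hgap hcross hbase ?_ hx (hr.1.symm h))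
    exact fun x' y' hlt => ih' x' y' (by omega)
  exact hbase x y h (by omega) (by omega)

end Reduction

theorem finite_setOf_tailLen_le (M : ℕ) : {x : AltWord | x.tailLen ≤ M}.Finite :=
  (Set.finite_range fun p : Bool × Fin (M + 1) => (⟨p.1, p.2⟩ : AltWord)).subset
    fun x hx => ⟨(x.head, ⟨x.tailLen, Nat.lt_succ_of_le hx⟩), rfl⟩

theorem rightNoetherian : RightNoetherian AltWord := by
  intro r hr
  choose Kg hKg using fun b =>
    Nat.exists_bound_witness_le_fst fun m p => 0 < p ∧ r ⟨b, m⟩ ⟨b, m + p⟩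
  choose Kc hKc using fun b => Nat.exists_bound_witness_le_fst fun m n => r ⟨!b, m⟩ ⟨b, n⟩
  have hK : ∀ b, Kg b + Kc b ≤ Kg true + Kg false + Kc true + Kc false := fun b => by
    cases b <;> omega
  set M := 3 * (Kg true + Kg false + Kc true + Kc false)
  refine isFGRightCongruence_of_finite hr (finite_setOf_tailLen_le M) fun r' hr' hbase x y h => ?_
  refine rel_of_rel hr hr' (M := M) ?_ ?_ (fun x y h hx hy => hbase x hx y hy h) h
  · intro b n₁ n₂ hne h₁₂
    obtain ⟨m, p, hp, hmp⟩ := exists_rel_add_of_rel_of_ne hr h₁₂ hne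
    obtain ⟨m₀, p₀, ⟨hp₀, hw⟩, -, hm₀, hp₀M⟩ := hKg b m p ⟨hp, hmp⟩
    exact ⟨m₀, p₀, hp₀, by have := hK b; omega, hw⟩
  · intro b m n hmn
    obtain ⟨m₁, n₁, hw, hm, hm₁, hn₁⟩ := hKc b m n hmn
    exact ⟨m₁, n₁, hm, by have := hK b; omega, by have := hK b; omega, hw⟩

def toFreeSemigroup : AltWord → FreeSemigroup Bool
  | ⟨b, 0⟩ => .of b
  | ⟨b, n + 1⟩ => .of b * toFreeSemigroup ⟨!b, n⟩

theorem toFreeSemigroup_mk_zero (b : Bool) : toFreeSemigroup ⟨b, 0⟩ = .of b := by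
  rw [toFreeSemigroup]

theorem toFreeSemigroup_mk_succ (b : Bool) (n : ℕ) :
    toFreeSemigroup ⟨b, n + 1⟩ = .of b * toFreeSemigroup ⟨!b, n⟩ := by
  rw [toFreeSemigroup]

theorem conGen_of_mul_toFreeSemigroup (b : Bool) (x : AltWord) :
    conGen idempotentRel (.of b * x.toFreeSemigroup) (of b * x).toFreeSemigroup := by
  have hsq : conGen idempotentRel (.of b * .of b) (.of b) :=
    ConGen.Rel.of _ _ (by cases b <;> simp [idempotentRel])
  obtain ⟨c, n⟩ := x
  obtain rfl | rfl : c = b ∨ c = !b := by cases b <;> cases c <;> simp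
  · rw [of_mul_mk_self]
    cases n with
    | zero => rwa [toFreeSemigroup_mk_zero]
    | succ n =>
      rw [toFreeSemigroup_mk_succ, ← mul_assoc]
      exact (conGen idempotentRel).mul hsq ((conGen idempotentRel).refl _)
  · rw [of_mul_mk_not, toFreeSemigroup_mk_succ]
    exact (conGen idempotentRel).refl _

theorem conGen_toFreeSemigroup_mul (x y : AltWord) :
    conGen idempotentRel (x * y).toFreeSemigroup (x.toFreeSemigroup * y.toFreeSemigroup) := by
  obtain ⟨b, m⟩ := x
  induction m generalizing b with
  | zero =>
    rw [toFreeSemigroup_mk_zero]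
    exact (conGen idempotentRel).symm (conGen_of_mul_toFreeSemigroup b y)
  | succ m ih =>
    have hx : (⟨b, m + 1⟩ : AltWord) * y = of b * (⟨!b, m⟩ * y) := by
      rw [← mul_assoc, of_mul_mk_not]
    rw [hx, toFreeSemigroup_mk_succ, mul_assoc]
    exact ((conGen idempotentRel).symm (conGen_of_mul_toFreeSemigroup b _)).trans
      ((conGen idempotentRel).mul ((conGen idempotentRel).refl _) (ih !b))

def toQuotient : AltWord →ₙ* (conGen idempotentRel).Quotient where
  toFun x := x.toFreeSemigroup
  map_mul' x y := (Con.eq _).2 (conGen_toFreeSemigroup_mul x y)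

theorem toQuotient_surjective : Surjective toQuotient := by
  intro q
  induction q using Con.induction_on with | _ w =>
  induction w with
  | ih1 b => exact ⟨of b, congrArg _ (toFreeSemigroup_mk_zero b)⟩
  | ih2 b w _ hw =>
    obtain ⟨x, hx⟩ := hw
    refine ⟨of b * x, ?_⟩
    rw [map_mul, hx]
    exact congrArg (· * _) (congrArg _ (toFreeSemigroup_mk_zero b))

end AltWord

theorem freeProduct_of_trivial_rightNoetherian :
    RightNoetherian (conGen idempotentRel).Quotient :=
  AltWord.rightNoetherian.of_surjective AltWord.toQuotient AltWord.toQuotient_surjective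
end
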